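/- arXiv:1905.07547 — 7 statements merged into one kernel-verified Lean document; each statement's English description precedes it below -/
import Mathlib

section
/- For a finite metric space (X,d) and probability functions μ, ν on X, the minimum of Σ_{x,y} d(x,y)γ(x,y) over couplings γ of (μ,ν) equals the maximum of Σ_z u(z)(μ(z)−ν(z)) over 1-Lipschitz functions u. -/
private lemma kd_combo_lt {a b s t s' t' : ℝ} (ha : 0 ≤ a) (hb : 0 ≤ b) (hab : a + b = 1)
    (hs : s < s') (ht : t < t') : a * s + b * t < a * s' + b * t' := by
  rcases eq_or_lt_of_le ha with h | h
  · have hb1 : b = 1 := by linarith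
    simp [← h, hb1, ht]
  · nlinarith

private lemma kd_le_of_forall_eps {c e K : ℝ} (h : ∀ ε : ℝ, 0 < ε → c + ε * e < K) : c ≤ K := by
  by_contra hc
  push_neg at hc
  rcases le_or_gt 0 e with he | he
  · have := h 1 one_pos; nlinarith
  · have hp : 0 < (c - K) / (-2 * e) := by
      apply div_pos (by linarith) (by linarith)
    have h1 := h _ hp
    have he' : e ≠ 0 := ne_of_lt he
    have h2 : (c - K) / (-2 * e) * e = -(c - K) / 2 := by
      field_simp
    rw [h2] at h1
    linarith

private lemma kd_nonpos_of_forall {w K : ℝ} (h : ∀ s : ℝ, 0 < s → s * w < K) : w ≤ 0 := by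
  by_contra hw
  push_neg at hw
  have h1 := h ((|K| + 1) / w) (by positivity)
  rw [div_mul_cancel₀ _ (ne_of_gt hw)] at h1
  have := le_abs_self K
  linarith

private lemma kd_eq_zero_of_forall_mul_le {v K : ℝ} (h : ∀ t : ℝ, t * v ≤ K) : v = 0 := by
  by_contra hv
  have h1 := h ((K + 1) / v)
  rw [div_mul_cancel₀ _ hv] at h1
  linarith

private lemma kd_weak {X : Type*} [Fintype X] [MetricSpace X]
    (μ ν : X → ℝ) (u : X → ℝ) (hu : ∀ x y, |u x - u y| ≤ dist x y)
    (γ : X → X → ℝ) (hγ0 : ∀ x y, 0 ≤ γ x y) (hγ1 : ∀ x, ∑ y, γ x y = μ x)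
    (hγ2 : ∀ y, ∑ x, γ x y = ν y) :
    ∑ z, u z * (μ z - ν z) ≤ ∑ x, ∑ y, dist x y * γ x y := by
  have h1 : ∑ z, u z * (μ z - ν z) = ∑ x, ∑ y, (u x - u y) * γ x y := by
    simp_rw [mul_sub, Finset.sum_sub_distrib, sub_mul, Finset.sum_sub_distrib]
    congr 1
    · exact Finset.sum_congr rfl fun x _ => by rw [← hγ1 x, Finset.mul_sum]
    · rw [Finset.sum_comm]
      exact Finset.sum_congr rfl fun y _ => by rw [← hγ2 y, Finset.mul_sum]
  rw [h1]
  refine Finset.sum_le_sum fun x _ => Finset.sum_le_sum fun y _ => ?_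
  exact mul_le_mul_of_nonneg_right ((le_abs_self _).trans (hu x y)) (hγ0 x y)

private lemma kd_tighten {X : Type*} [Fintype X] [MetricSpace X] [Nonempty X]
    (f g : X → ℝ) (hfg : ∀ x y, f x + g y ≤ dist x y) :
    ∃ u : X → ℝ, (∀ x y, |u x - u y| ≤ dist x y) ∧ (∀ x, f x ≤ u x) ∧ (∀ y, u y ≤ - g y) := by
  set u : X → ℝ := fun x => Finset.univ.inf' Finset.univ_nonempty (fun y => dist x y - g y) with hu
  have key : ∀ x x', u x ≤ dist x x' + u x' := by
    intro x x'
    obtain ⟨y', -, hy'⟩ := Finset.exists_mem_eq_inf' (s := (Finset.univ : Finset X))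
      Finset.univ_nonempty (fun y => dist x' y - g y)
    have h1 : u x ≤ dist x y' - g y' := Finset.inf'_le _ (Finset.mem_univ y')
    have h2 : dist x y' ≤ dist x x' + dist x' y' := dist_triangle x x' y'
    have h3 : u x' = dist x' y' - g y' := hy'
    linarith
  refine ⟨u, fun x y => ?_, fun x => ?_, fun y => ?_⟩
  · rw [abs_sub_le_iff]
    constructor
    · have := key x y; linarith
    · have := key y x; rw [dist_comm] at this; linarith
  · refine Finset.le_inf' _ _ fun y _ => ?_
    have := hfg x y; linarith
  · have : u y ≤ dist y y - g y := Finset.inf'_le _ (Finset.mem_univ y)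
    simpa using this

/-- Kantorovich duality on a finite metric space: the minimal transport cost over
couplings equals the maximal value of the dual problem over 1-Lipschitz potentials. -/
theorem kantorovich_duality {X : Type*} [Fintype X] [MetricSpace X]
    (μ ν : X → ℝ) (hμ0 : ∀ x, 0 ≤ μ x) (hμ1 : ∑ x, μ x = 1)
    (hν0 : ∀ x, 0 ≤ ν x) (hν1 : ∑ x, ν x = 1) :
    ∃ c : ℝ,
      IsLeast {r | ∃ γ : X → X → ℝ, (∀ x y, 0 ≤ γ x y) ∧
          (∀ x, ∑ y, γ x y = μ x) ∧ (∀ y, ∑ x, γ x y = ν y) ∧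
          r = ∑ x, ∑ y, dist x y * γ x y} c ∧
      IsGreatest {r | ∃ u : X → ℝ, (∀ x y, |u x - u y| ≤ dist x y) ∧
          r = ∑ z, u z * (μ z - ν z)} c := by
  classical
  have hXne : Nonempty X := by
    by_contra h
    rw [not_nonempty_iff] at h
    rw [Finset.univ_eq_empty, Finset.sum_empty] at hμ1
    norm_num at hμ1
  obtain ⟨x₀⟩ := id hXne
  set L : (X → ℝ) → ℝ := fun u => ∑ z, u z * (μ z - ν z) with hL
  set U₀ : Set (X → ℝ) := {u | (∀ x y, |u x - u y| ≤ dist x y) ∧ u x₀ = 0} with hU₀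
  -- compactness of U₀
  have hU₀closed : IsClosed U₀ := by
    have : U₀ = (⋂ x, ⋂ y, {u : X → ℝ | |u x - u y| ≤ dist x y}) ∩ {u : X → ℝ | u x₀ = 0} := by
      ext u; simp [hU₀, Set.mem_iInter]
    rw [this]
    refine IsClosed.inter (isClosed_iInter fun x => isClosed_iInter fun y => ?_)
      (isClosed_eq (continuous_apply x₀) continuous_const)
    exact isClosed_le (((continuous_apply x).sub (continuous_apply y)).abs) continuous_const
  have hU₀compact : IsCompact U₀ := by
    refine IsCompact.of_isClosed_subset (isCompact_univ_pi fun z =>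
      isCompact_Icc (a := -(dist z x₀)) (b := dist z x₀)) hU₀closed ?_
    rintro u ⟨hu1, hu2⟩
    intro z _
    have := hu1 z x₀
    rw [hu2] at this
    rw [abs_sub_le_iff] at this
    exact ⟨by linarith [this.2], by linarith [this.1]⟩
  have hLcont : Continuous L :=
    continuous_finset_sum _ fun z _ => (continuous_apply z).mul continuous_const
  have h0mem : (0 : X → ℝ) ∈ U₀ := by
    refine ⟨fun x y => by simp [dist_nonneg], rfl⟩
  obtain ⟨ustar, hustar, hmax⟩ := hU₀compact.exists_isMaxOn ⟨0, h0mem⟩ hLcont.continuousOn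
  set D : ℝ := L ustar with hD
  have hustarLip : ∀ x y, |ustar x - ustar y| ≤ dist x y := hustar.1
  -- every 1-Lipschitz u has L u ≤ D
  have hDub : ∀ u : X → ℝ, (∀ x y, |u x - u y| ≤ dist x y) → L u ≤ D := by
    intro u hu
    have hmem : (fun z => u z - u x₀) ∈ U₀ := ⟨fun x y => by simpa using hu x y, by simp⟩
    have heq : L (fun z => u z - u x₀) = L u := by
      simp only [hL, sub_mul, Finset.sum_sub_distrib]
      have : ∑ z, u x₀ * (μ z - ν z) = 0 := by
        rw [← Finset.mul_sum, Finset.sum_sub_distrib, hμ1, hν1]; ring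
      linarith
    have h2 : L (fun z => u z - u x₀) ≤ L ustar := hmax hmem
    rw [heq] at h2
    exact h2
    -- Separation argument
  set dv : X × X → ℝ := fun p => dist p.1 p.2 with hdv
  set B : (X → ℝ) → (X → ℝ) → ℝ := fun f g => ∑ x, f x * μ x + ∑ x, g x * ν x with hB
  set C : Set ((X × X → ℝ) × ℝ) :=
    {q | ∃ f g : X → ℝ, (∀ p : X × X, f p.1 + g p.2 < q.1 p) ∧ q.2 < B f g} with hC
  have hCopen : IsOpen C := by
    have hrw : C = ⋃ fg : (X → ℝ) × (X → ℝ),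
        ((⋂ p : X × X, {q : (X × X → ℝ) × ℝ | fg.1 p.1 + fg.2 p.2 < q.1 p}) ∩
          {q : (X × X → ℝ) × ℝ | q.2 < B fg.1 fg.2}) := by
      ext q
      simp only [hC, Set.mem_setOf_eq, Set.mem_iUnion, Set.mem_inter_iff, Set.mem_iInter,
        Prod.exists]
    rw [hrw]
    refine isOpen_iUnion fun fg => ?_
    refine IsOpen.inter (isOpen_iInter_of_finite fun p => ?_)
      (isOpen_lt continuous_snd continuous_const)
    exact isOpen_lt continuous_const ((continuous_apply p).comp continuous_fst)
  have hCconv : Convex ℝ C := by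
    rintro q₁ ⟨f₁, g₁, h₁, h₁'⟩ q₂ ⟨f₂, g₂, h₂, h₂'⟩ a b ha hb hab
    refine ⟨a • f₁ + b • f₂, a • g₁ + b • g₂, fun p => ?_, ?_⟩
    · have := kd_combo_lt ha hb hab (h₁ p) (h₂ p)
      simp only [Pi.add_apply, Pi.smul_apply, smul_eq_mul, Prod.fst_add, Prod.smul_fst]
      convert this using 1 <;> ring
    · have := kd_combo_lt ha hb hab h₁' h₂'
      have hBlin : B (a • f₁ + b • f₂) (a • g₁ + b • g₂) = a * B f₁ g₁ + b * B f₂ g₂ := by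
        simp only [hB, Pi.add_apply, Pi.smul_apply, smul_eq_mul, add_mul,
          Finset.sum_add_distrib, mul_add]
        rw [Finset.mul_sum, Finset.mul_sum, Finset.mul_sum, Finset.mul_sum]
        simp_rw [mul_assoc]
        ring
      rw [hBlin]
      simpa using this
  have hznotin : ((dv, D) : (X × X → ℝ) × ℝ) ∉ C := by
    rintro ⟨f, g, hfg, hBD⟩
    obtain ⟨u, hu, huf, hug⟩ := kd_tighten f g (fun x y => (hfg (x, y)).le)
    have hval : B f g ≤ L u := by
      have h1 : ∑ x, f x * μ x ≤ ∑ x, u x * μ x :=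
        Finset.sum_le_sum fun x _ => mul_le_mul_of_nonneg_right (huf x) (hμ0 x)
      have h2 : ∑ x, g x * ν x ≤ ∑ x, (- u x) * ν x :=
        Finset.sum_le_sum fun x _ => mul_le_mul_of_nonneg_right (by linarith [hug x]) (hν0 x)
      have h3 : L u = ∑ x, u x * μ x + ∑ x, (- u x) * ν x := by
        simp only [hL, mul_sub, Finset.sum_sub_distrib, neg_mul, Finset.sum_neg_distrib]
        ring
      rw [h3, hB]
      exact add_le_add h1 h2
    have := hDub u hu
    simp only at hBD
    linarith
  obtain ⟨F, hF⟩ := geometric_hahn_banach_open_point hCconv hCopen hznotin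
  set K : ℝ := F (dv, D) with hK
  -- decomposition of F
  have hFsplit : ∀ (y : X × X → ℝ) (t : ℝ), F (y, t) = F (y, 0) + t * F (0, 1) := by
    intro y t
    have hyt : ((y, t) : (X × X → ℝ) × ℝ) = (y, (0 : ℝ)) + t • ((0 : X × X → ℝ), (1 : ℝ)) := by
      simp [Prod.ext_iff]
    rw [hyt, map_add, map_smul, smul_eq_mul]
  set α : ℝ := F (0, 1) with hα
  set Φ : (X × X → ℝ) → ℝ := fun y => F (y, 0) with hΦ
  have hΦdef : ∀ y : X × X → ℝ, F (y, 0) = Φ y := fun _ => rfl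
  -- basic membership generator
  have hmemC : ∀ (f g : X → ℝ) (w : X × X → ℝ) (ε s : ℝ), 0 < ε → 0 < s → (∀ p, 0 ≤ w p) →
      (((fun p : X × X => f p.1 + g p.2 + ε) + w, B f g - s) : (X × X → ℝ) × ℝ) ∈ C := by
    intro f g w ε s hε hs hw
    exact ⟨f, g, fun p => by have := hw p; simp only [Pi.add_apply]; linarith,
      by simp only; linarith⟩
    -- linearity facts for Φ
  have hΦadd : ∀ y z : X × X → ℝ, Φ (y + z) = Φ y + Φ z := by
    intro y z
    have h1 : ((y + z, (0 : ℝ)) : (X × X → ℝ) × ℝ) = (y, (0 : ℝ)) + (z, (0 : ℝ)) := by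
      simp [Prod.ext_iff]
    simp only [hΦ]
    rw [h1, map_add]
  have hΦsmul : ∀ (c : ℝ) (y : X × X → ℝ), Φ (c • y) = c * Φ y := by
    intro c y
    have h1 : ((c • y, (0 : ℝ)) : (X × X → ℝ) × ℝ) = c • (y, (0 : ℝ)) := by
      simp [Prod.ext_iff]
    simp only [hΦ]
    rw [h1, map_smul, smul_eq_mul]
  -- the key inequality family
  have step : ∀ (f g : X → ℝ) (ε : ℝ), 0 < ε →
      Φ (fun p : X × X => f p.1 + g p.2) + B f g * α + ε * (Φ (fun _ => 1) - α) < K := by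
    intro f g ε hε
    have hm := hmemC f g 0 ε ε hε hε (fun p => le_refl 0)
    have hFm := hF _ hm
    have harg : ((fun p : X × X => f p.1 + g p.2 + ε) + 0 : X × X → ℝ)
        = (fun p : X × X => f p.1 + g p.2) + ε • (fun _ => (1 : ℝ)) := by
      funext p
      simp
    rw [hFsplit, hΦdef, harg, hΦadd, hΦsmul] at hFm
    ring_nf at hFm ⊢
    linarith
  have hψ : ∀ f g : X → ℝ, Φ (fun p : X × X => f p.1 + g p.2) + B f g * α = 0 := by
    intro f g
    have hle : ∀ f g : X → ℝ, Φ (fun p : X × X => f p.1 + g p.2) + B f g * α ≤ K := by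
      intro f g
      exact kd_le_of_forall_eps (fun ε hε => step f g ε hε)
    refine kd_eq_zero_of_forall_mul_le (K := K) ?_
    intro t
    have hsc : Φ (fun p : X × X => (t • f) p.1 + (t • g) p.2) + B (t • f) (t • g) * α
        = t * (Φ (fun p : X × X => f p.1 + g p.2) + B f g * α) := by
      have h1 : (fun p : X × X => (t • f) p.1 + (t • g) p.2)
          = t • (fun p : X × X => f p.1 + g p.2) := by
        funext p
        simp [mul_add]
      have h2 : B (t • f) (t • g) = t * B f g := by
        simp only [hB, Pi.smul_apply, smul_eq_mul, mul_add]
        rw [Finset.mul_sum, Finset.mul_sum]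
        simp_rw [mul_assoc]
      rw [h1, hΦsmul, h2]
      ring
    have := hle (t • f) (t • g)
    rw [hsc] at this
    exact this
  -- sign facts
  have hα0 : 0 ≤ α := by
    have h1 : ∀ s : ℝ, 0 < s → s * (-α) < K - Φ (fun _ : X × X => (1:ℝ)) := by
      intro s hs
      have hm := hmemC 0 0 0 1 s one_pos hs (fun p => le_refl 0)
      have hFm := hF _ hm
      rw [hFsplit, hΦdef] at hFm
      have hB0 : B 0 0 = 0 := by simp [hB]
      rw [hB0] at hFm
      simp only [add_zero, Pi.zero_apply, zero_add] at hFm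
      rw [zero_sub, neg_mul] at hFm
      rw [mul_neg]
      linarith
    have := kd_nonpos_of_forall h1
    linarith
  have hα0' : α ≠ 0 := by
    intro hzero
    have hψ0 : ∀ f g : X → ℝ, Φ (fun p : X × X => f p.1 + g p.2) = 0 := by
      intro f g
      have := hψ f g
      rw [hzero] at this
      simpa using this
    have hone : Φ (fun _ : X × X => (1:ℝ)) = 0 := by
      have := hψ0 (fun _ => 1) 0
      simpa using this
    -- Slater point
    have hmem2 : ((dv + (-(1/2) : ℝ) • ((fun _ => (1:ℝ)) : X × X → ℝ),
        B (fun _ => -1) (fun _ => -1) - 1) : (X × X → ℝ) × ℝ) ∈ C := by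
      refine ⟨fun _ => -1, fun _ => -1, fun p => ?_, sub_lt_self _ one_pos⟩
      have h9 := dist_nonneg (x := p.1) (y := p.2)
      simp only [Pi.add_apply, Pi.smul_apply, smul_eq_mul, hdv]
      norm_num
      linarith
    have hFm := hF _ hmem2
    rw [hFsplit, hΦdef, hΦadd, hΦsmul, hone, hzero] at hFm
    have hK2 : K = Φ dv + D * α := by rw [hK, hFsplit, hΦdef]
    rw [hK2, hzero] at hFm
    simp at hFm
  have hαpos : 0 < α := lt_of_le_of_ne hα0 (Ne.symm hα0')
  have hK0 : 0 ≤ K := by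
    refine kd_le_of_forall_eps (c := 0) (e := Φ (fun _ : X × X => (1:ℝ)) - α) ?_
    intro ε hε
    have h2 := step 0 0 ε hε
    have hz : (fun p : X × X => (0 : X → ℝ) p.1 + (0 : X → ℝ) p.2) = (0 : X × X → ℝ) := by
      funext p; simp
    rw [hz] at h2
    have hΦ0 : Φ (0 : X × X → ℝ) = 0 := by
      rw [← hΦdef]
      exact map_zero F
    have hB0 : B 0 0 = 0 := by simp [hB]
    rw [hΦ0, hB0] at h2
    linarith
  -- nonnegativity of the candidate coupling
  have hγsign : ∀ p₀ : X × X, Φ (Pi.single p₀ 1) ≤ 0 := by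
    intro p₀
    have h1 : ∀ s : ℝ, 0 < s → s * Φ (Pi.single p₀ 1) <
        K - Φ (fun _ : X × X => (1:ℝ)) + α := by
      intro s hs
      have hm := hmemC 0 0 (s • (Pi.single p₀ 1 : X × X → ℝ)) 1 1 one_pos one_pos
        (fun p => by
          have : (0:ℝ) ≤ (Pi.single p₀ 1 : X × X → ℝ) p := by
            rw [Pi.single_apply]
            split <;> norm_num
          simp only [Pi.smul_apply, smul_eq_mul]
          positivity)
      have hFm := hF _ hm
      rw [hFsplit, hΦdef, hΦadd, hΦsmul] at hFm
      have hB0 : B 0 0 = 0 := by simp [hB]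
      rw [hB0] at hFm
      simp only [Pi.zero_apply, zero_add] at hFm
      rw [zero_sub, neg_one_mul] at hFm
      linarith
    exact kd_nonpos_of_forall h1
    -- expansion of Φ in coordinates
  have hrep : ∀ h : X × X → ℝ, ∑ p : X × X, (h p) • (Pi.single p 1 : X × X → ℝ) = h := by
    intro h
    have h1 : ∀ p : X × X, (h p) • (Pi.single p 1 : X × X → ℝ) = Pi.single p (h p) := by
      intro p
      rw [← Pi.single_smul, smul_eq_mul, mul_one]
    simp_rw [h1]
    exact Finset.univ_sum_single h
  have hΦsum : ∀ h' : (X × X) → (X × X → ℝ), Φ (∑ p, h' p) = ∑ p, Φ (h' p) := by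
    intro h'
    have h2 := map_sum (F.toLinearMap.comp (LinearMap.inl ℝ (X × X → ℝ) ℝ)) h' Finset.univ
    exact h2
  have hexp : ∀ h : X × X → ℝ, Φ h = ∑ p : X × X, h p * Φ (Pi.single p 1) := by
    intro h
    conv_lhs => rw [← hrep h]
    rw [hΦsum]
    exact Finset.sum_congr rfl fun p _ => hΦsmul _ _
  -- the coupling
  set γ : X → X → ℝ := fun x y => -(Φ (Pi.single (x, y) 1)) / α with hγ
  have hγ0 : ∀ x y, 0 ≤ γ x y := fun x y =>
    div_nonneg (by linarith [hγsign (x, y)]) hα0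
  have hγval : ∀ p : X × X, Φ (Pi.single p 1) = -(γ p.1 p.2 * α) := by
    intro p
    simp only [hγ]
    rw [div_mul_cancel₀ _ hα0', neg_neg]
  -- margins
  have hmarg1 : ∀ x' : X, ∑ y, γ x' y = μ x' := by
    intro x'
    have h1 := hψ (Pi.single x' 1) 0
    rw [hexp] at h1
    have hBv : B (Pi.single x' 1) 0 = μ x' := by
      simp [hB, Pi.single_apply, ite_mul]
    have h2 : ∑ p : X × X, ((Pi.single x' 1 : X → ℝ) p.1 + (0 : X → ℝ) p.2) *
        Φ (Pi.single p 1) = ∑ y, Φ (Pi.single (x', y) 1) := by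
      rw [Fintype.sum_prod_type]
      simp [Pi.single_apply, ite_mul]
    rw [hBv, h2] at h1
    have h3 : ∑ y, Φ (Pi.single (x', y) 1) = -((∑ y, γ x' y) * α) := by
      simp_rw [hγval]
      rw [Finset.sum_neg_distrib, ← Finset.sum_mul]
    rw [h3] at h1
    have h4 : (∑ y, γ x' y) * α = μ x' * α := by linarith
    exact mul_right_cancel₀ hα0' h4
  have hmarg2 : ∀ y' : X, ∑ x, γ x y' = ν y' := by
    intro y'
    have h1 := hψ 0 (Pi.single y' 1)
    rw [hexp] at h1
    have hBv : B 0 (Pi.single y' 1) = ν y' := by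
      simp [hB, Pi.single_apply, ite_mul]
    have h2 : ∑ p : X × X, ((0 : X → ℝ) p.1 + (Pi.single y' 1 : X → ℝ) p.2) *
        Φ (Pi.single p 1) = ∑ x, Φ (Pi.single (x, y') 1) := by
      rw [Fintype.sum_prod_type]
      simp [Pi.single_apply, ite_mul]
    rw [hBv, h2] at h1
    have h3 : ∑ x, Φ (Pi.single (x, y') 1) = -((∑ x, γ x y') * α) := by
      simp_rw [hγval]
      rw [Finset.sum_neg_distrib, ← Finset.sum_mul]
    rw [h3] at h1
    have h4 : (∑ x, γ x y') * α = ν y' * α := by linarith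
    exact mul_right_cancel₀ hα0' h4
  -- cost bound
  have hKval : K = Φ dv + D * α := by rw [hK, hFsplit, hΦdef]
  have hΦdv : Φ dv = -((∑ x, ∑ y, dist x y * γ x y) * α) := by
    rw [hexp, Fintype.sum_prod_type]
    simp_rw [hγval, hdv, mul_neg, ← mul_assoc]
    simp_rw [Finset.sum_neg_distrib, ← Finset.sum_mul]
  have hcost : ∑ x, ∑ y, dist x y * γ x y ≤ D := by
    have h5 := hK0
    rw [hKval, hΦdv] at h5
    nlinarith [hαpos]
  -- weak duality at the optimum
  have hwd : D ≤ ∑ x, ∑ y, dist x y * γ x y :=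
    kd_weak μ ν ustar hustarLip γ hγ0 hmarg1 hmarg2
  have hSD : ∑ x, ∑ y, dist x y * γ x y = D := le_antisymm hcost hwd
  refine ⟨D, ⟨⟨γ, hγ0, hmarg1, hmarg2, hSD.symm⟩, ?_⟩, ⟨ustar, hustarLip, hD⟩, ?_⟩
  · rintro r ⟨γ₂, h0, h1, h2, rfl⟩
    exact kd_weak μ ν ustar hustarLip γ₂ h0 h1 h2
  · rintro r ⟨u, hu, rfl⟩
    exact hDub u hu
end

section
/- For a finite metric space (X,d), the Arens–Eells norm equals the Kantorovich–Bernstein norm: for all ξ ∈ M₀(X), inf{Σ|a(x,y)|d(x,y) : ξ = Σ a(x,y)(δ_x−δ_y)} = sup{Σ_z ξ(z)u(z) : u ∈ Lip₁⁺(d)}. -/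
private lemma rep_simp {X : Type*} [Fintype X] [DecidableEq X] (a : X → X → ℝ) (z : X) :
    (∑ x, ∑ y, a x y * ((if z = x then (1:ℝ) else 0) - (if z = y then 1 else 0)))
      = (∑ y, a z y) - ∑ x, a x z := by
  simp only [mul_sub, Finset.sum_sub_distrib, mul_ite, mul_one, mul_zero]
  congr 1
  · have h1 : ∀ x, (∑ y, if z = x then a x y else 0) = if z = x then ∑ y, a x y else 0 := by
      intro x; split <;> simp
    simp [h1, Finset.sum_ite_eq]
  · simp [Finset.sum_ite_eq]

private lemma pairing {X : Type*} [Fintype X] [DecidableEq X] (a : X → X → ℝ) (u : X → ℝ) :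
    (∑ z, ((∑ y, a z y) - ∑ x, a x z) * u z) = ∑ x, ∑ y, a x y * (u x - u y) := by
  simp only [sub_mul, Finset.sum_sub_distrib, Finset.sum_mul, mul_sub]
  congr 1
  rw [Finset.sum_comm]


/-- The Arens–Eells norm of `ξ` for the ground distance `d`: the infimum of
`∑ |a x y| * d x y` over all representations `ξ = ∑ a x y • (δ_x - δ_y)`. -/
noncomputable def aeNorm {X : Type*} [Fintype X] [DecidableEq X]
    (d : X → X → ℝ) (ξ : X → ℝ) : ℝ :=
  sInf {r | ∃ a : X → X → ℝ,
    (∀ z, ξ z = ∑ x, ∑ y, a x y * ((if z = x then 1 else 0) - (if z = y then 1 else 0))) ∧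
    r = ∑ x, ∑ y, |a x y| * d x y}

/-- On a finite pointed metric space the Arens–Eells norm equals the
Kantorovich–Bernstein norm computed over 1-Lipschitz functions vanishing at the
base point. -/
theorem aeNorm_eq_kbNorm {X : Type*} [Fintype X] [DecidableEq X] [MetricSpace X]
    (x₀ : X) (ξ : X → ℝ) (hξ : ∑ z, ξ z = 0) :
    aeNorm dist ξ =
      sSup {r | ∃ u : X → ℝ, u x₀ = 0 ∧ (∀ x y, |u x - u y| ≤ dist x y) ∧
        r = ∑ z, ξ z * u z} := by
  classical
  set Sinf : Set ℝ := {r | ∃ a : X → X → ℝ,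
    (∀ z, ξ z = ∑ x, ∑ y, a x y * ((if z = x then 1 else 0) - (if z = y then 1 else 0))) ∧
    r = ∑ x, ∑ y, |a x y| * dist x y} with hSinf
  set Ssup : Set ℝ := {r | ∃ u : X → ℝ, u x₀ = 0 ∧ (∀ x y, |u x - u y| ≤ dist x y) ∧
        r = ∑ z, ξ z * u z} with hSsup
  show sInf Sinf = sSup Ssup
  -- Nonemptiness of the infimum set
  have hne_inf : Sinf.Nonempty := by
    refine ⟨∑ x, ∑ y, |(if y = x₀ then ξ x else 0)| * dist x y,
      fun x y => if y = x₀ then ξ x else 0, fun z => ?_, rfl⟩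
    rw [rep_simp]
    simp [Finset.sum_ite_eq', Finset.sum_ite, hξ]
  -- lower bound
  have hbd_inf : BddBelow Sinf := by
    refine ⟨0, fun r hr => ?_⟩
    obtain ⟨a, -, rfl⟩ := hr
    positivity
  -- easy direction pointwise
  have heasy : ∀ r ∈ Ssup, ∀ s ∈ Sinf, r ≤ s := by
    rintro r ⟨u, hu0, hul, rfl⟩ s ⟨a, ha, rfl⟩
    have : (∑ z, ξ z * u z) = ∑ x, ∑ y, a x y * (u x - u y) := by
      rw [← pairing]
      refine Finset.sum_congr rfl fun z _ => ?_
      rw [ha z, rep_simp]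
    rw [this]
    refine Finset.sum_le_sum fun x _ => Finset.sum_le_sum fun y _ => ?_
    calc a x y * (u x - u y) ≤ |a x y * (u x - u y)| := le_abs_self _
      _ = |a x y| * |u x - u y| := abs_mul _ _
      _ ≤ |a x y| * dist x y := by
          exact mul_le_mul_of_nonneg_left (hul x y) (abs_nonneg _)
  have h0sup : (0:ℝ) ∈ Ssup := ⟨0, rfl, fun x y => by simp [dist_nonneg], by simp⟩
  have hne_sup : Ssup.Nonempty := ⟨0, h0sup⟩
  obtain ⟨s₀, hs₀⟩ := hne_inf
  have hbdd_sup : BddAbove Ssup := ⟨s₀, fun r hr => heasy r hr s₀ hs₀⟩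
  refine le_antisymm ?_ (csSup_le hne_sup fun r hr => le_csInf ⟨s₀, hs₀⟩ (heasy r hr))
  -- hard direction
  by_contra hcon
  push_neg at hcon
  obtain ⟨s', hs1, hs2⟩ := exists_between hcon
  have hs'pos : 0 < s' := lt_of_le_of_lt (le_csSup hbdd_sup h0sup) hs1
  -- minimal positive distance
  obtain ⟨δ, hδpos, hδ⟩ : ∃ δ > 0, ∀ x y : X, x ≠ y → δ ≤ dist x y := by
    by_cases hsub : ∃ p : X × X, p.1 ≠ p.2
    · obtain ⟨p₀, hp₀⟩ := hsub
      have hs : (Finset.univ.filter fun p : X × X => p.1 ≠ p.2).Nonempty :=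
        ⟨p₀, by simp [hp₀]⟩
      refine ⟨(Finset.univ.filter fun p : X × X => p.1 ≠ p.2).inf' hs
        (fun p => dist p.1 p.2), ?_, ?_⟩
      · rw [gt_iff_lt, Finset.lt_inf'_iff]
        intro p hp
        simp only [Finset.mem_filter, Finset.mem_univ, true_and] at hp
        exact dist_pos.2 hp
      · intro x y hxy
        exact Finset.inf'_le (fun p : X × X => dist p.1 p.2) (b := ((x, y) : X × X)) (Finset.mem_filter.2 ⟨Finset.mem_univ _, hxy⟩)
    · exact ⟨1, one_pos, fun x y hxy => absurd ⟨(x, y), hxy⟩ hsub⟩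
  -- the linear map sending coefficients to the represented function
  set T : (X → X → ℝ) →ₗ[ℝ] (X → ℝ) :=
    { toFun := fun a z => (∑ y, a z y) - ∑ x, a x z
      map_add' := by
        intro a b; funext z
        simp only [Pi.add_apply, Finset.sum_add_distrib]
        ring
      map_smul' := by
        intro c a; funext z
        simp only [Pi.smul_apply, smul_eq_mul, RingHom.id_apply, ← Finset.mul_sum]
        ring } with hT
  set K : Set (X → X → ℝ) :=
    {a | (∀ x, a x x = 0) ∧ ∑ x, ∑ y, |a x y| * dist x y ≤ s'} with hK
  have hKconv : Convex ℝ K := by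
    rintro a ⟨had, hac⟩ b ⟨hbd, hbc⟩ p q hp hq hpq
    constructor
    · intro x; simp [Pi.add_apply, Pi.smul_apply, had x, hbd x]
    · calc ∑ x, ∑ y, |(p • a + q • b) x y| * dist x y
          ≤ ∑ x, ∑ y, (p * |a x y| + q * |b x y|) * dist x y := by
            refine Finset.sum_le_sum fun x _ => Finset.sum_le_sum fun y _ => ?_
            refine mul_le_mul_of_nonneg_right ?_ dist_nonneg
            calc |(p • a + q • b) x y| = |p * a x y + q * b x y| := by
                  simp [Pi.add_apply, Pi.smul_apply, smul_eq_mul]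
              _ ≤ |p * a x y| + |q * b x y| := abs_add_le _ _
              _ = p * |a x y| + q * |b x y| := by
                  rw [abs_mul, abs_mul, abs_of_nonneg hp, abs_of_nonneg hq]
        _ = p * (∑ x, ∑ y, |a x y| * dist x y) + q * (∑ x, ∑ y, |b x y| * dist x y) := by
            simp only [Finset.mul_sum]
            rw [← Finset.sum_add_distrib]
            refine Finset.sum_congr rfl fun x _ => ?_
            rw [← Finset.sum_add_distrib]
            refine Finset.sum_congr rfl fun y _ => ?_
            ring
        _ ≤ p * s' + q * s' := by
            have := mul_le_mul_of_nonneg_left hac hp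
            have := mul_le_mul_of_nonneg_left hbc hq
            linarith
        _ = s' := by rw [← add_mul, hpq, one_mul]
  have hcostcont : Continuous fun a : X → X → ℝ => ∑ x, ∑ y, |a x y| * dist x y := by
    refine continuous_finset_sum _ fun x _ => continuous_finset_sum _ fun y _ => ?_
    exact (((continuous_apply y).comp (continuous_apply x : Continuous fun a : X → X → ℝ => a x)).abs).mul continuous_const
  have hKcl : IsClosed K := by
    have h1 : IsClosed {a : X → X → ℝ | ∀ x, a x x = 0} := by
      rw [Set.setOf_forall]
      exact isClosed_iInter fun x =>
        isClosed_eq ((continuous_apply x).comp (continuous_apply x)) continuous_const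
    have h2 : IsClosed {a : X → X → ℝ | ∑ x, ∑ y, |a x y| * dist x y ≤ s'} :=
      isClosed_le hcostcont continuous_const
    exact h1.inter h2
  have hKbd : K ⊆ Metric.closedBall 0 (max (s' / δ) 0) := by
    rintro a ⟨hd, hcost⟩
    rw [Metric.mem_closedBall, dist_zero_right]
    refine (pi_norm_le_iff_of_nonneg (le_max_right _ _)).2 fun x =>
      (pi_norm_le_iff_of_nonneg (le_max_right _ _)).2 fun y => ?_
    rw [Real.norm_eq_abs]
    rcases eq_or_ne x y with rfl | hxy
    · simp [hd x, le_max_right]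
    · refine le_max_of_le_left ?_
      have hterm : |a x y| * dist x y ≤ s' := by
        refine le_trans ?_ hcost
        calc |a x y| * dist x y ≤ ∑ y', |a x y'| * dist x y' := by
              exact Finset.single_le_sum (f := fun y' => |a x y'| * dist x y') (fun y' _ => by positivity) (Finset.mem_univ y)
          _ ≤ ∑ x', ∑ y', |a x' y'| * dist x' y' := by
              exact Finset.single_le_sum (f := fun x' => ∑ y', |a x' y'| * dist x' y')
                (fun x' _ => by positivity) (Finset.mem_univ x)
      rw [le_div_iff₀ hδpos]
      calc |a x y| * δ ≤ |a x y| * dist x y :=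
            mul_le_mul_of_nonneg_left (hδ x y hxy) (abs_nonneg _)
        _ ≤ s' := hterm
  have hKcpt : IsCompact K :=
    (Metric.isCompact_of_isClosed_isBounded hKcl
      (Metric.isBounded_closedBall.subset hKbd))
  have hTcont : Continuous T := T.continuous_of_finiteDimensional
  have hCcpt : IsCompact (T '' K) := hKcpt.image hTcont
  have hCconv : Convex ℝ (T '' K) := hKconv.linear_image T
  have hξC : ξ ∉ T '' K := by
    rintro ⟨a, ⟨hdiag, hcost⟩, hTa⟩
    have hmem : (∑ x, ∑ y, |a x y| * dist x y) ∈ Sinf := by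
      refine ⟨a, fun z => ?_, rfl⟩
      rw [rep_simp]
      exact (congrFun hTa z).symm
    have := csInf_le hbd_inf hmem
    linarith
  obtain ⟨f, c, hfC, hfξ⟩ :=
    geometric_hahn_banach_closed_point hCconv hCcpt.isClosed hξC
  have hc0 : 0 < c := by
    have h0K : (0 : X → ℝ) ∈ T '' K :=
      ⟨0, ⟨fun x => rfl, by simp [hs'pos.le]⟩, map_zero T⟩
    have := hfC 0 h0K
    simpa using this
  set g : X → ℝ := fun z => f (Pi.single z (1:ℝ)) with hg
  -- key strict bound
  have hkey : ∀ x y : X, x ≠ y → (s' / dist x y) * (g x - g y) < c := by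
    intro x y hxy
    have hd : (0:ℝ) < dist x y := dist_pos.2 hxy
    set a : X → X → ℝ := fun p q => if p = x then if q = y then s' / dist x y else 0 else 0
      with ha
    have haK : a ∈ K := by
      constructor
      · intro p
        simp only [ha]
        split_ifs with h1 h2
        · exact absurd (h1 ▸ h2 : x = y) hxy
        · rfl
        · rfl
      · have : ∀ p q, |a p q| * dist p q =
            if p = x then (if q = y then s' / dist x y * dist x y else 0) else 0 := by
          intro p q
          simp only [ha]
          split_ifs with h1 h2
          · subst h1; subst h2
            rw [abs_of_pos (by positivity)]
          · simp
          · simp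
        simp only [this]
        have hx1 : ∀ p : X,
            (∑ q, if p = x then (if q = y then s' / dist x y * dist x y else 0) else 0)
              = if p = x then s' / dist x y * dist x y else 0 := by
          intro p; split_ifs <;> simp
        simp only [hx1, Finset.sum_ite_eq', Finset.mem_univ, if_true]
        rw [div_mul_cancel₀ _ (ne_of_gt hd)]
    have hTa : T a = ((s' / dist x y) • (Pi.single x (1:ℝ) - Pi.single y (1:ℝ)) : X → ℝ) := by
      funext z
      show (∑ q, a z q) - (∑ p, a p z) = _
      have h1 : (∑ q, a z q) = if z = x then s' / dist x y else 0 := by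
        simp only [ha]
        split_ifs with h
        · simp [Finset.sum_ite_eq']
        · simp
      have h2 : (∑ p, a p z) = if z = y then s' / dist x y else 0 := by
        simp only [ha, Finset.sum_ite_eq', Finset.mem_univ, if_true]
      rw [h1, h2]
      simp only [Pi.smul_apply, Pi.sub_apply, Pi.single_apply, smul_eq_mul]
      split_ifs <;> ring
    have hlt := hfC (T a) ⟨a, haK, rfl⟩
    rw [hTa] at hlt
    rw [map_smul, map_sub] at hlt
    simpa [smul_eq_mul, mul_sub, hg] using hlt
  set u : X → ℝ := fun z => s' / c * (g z - g x₀) with hu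
  have hulip : ∀ x y : X, |u x - u y| ≤ dist x y := by
    intro x y
    rcases eq_or_ne x y with rfl | hxy
    · simp [dist_nonneg]
    · have hd : (0:ℝ) < dist x y := dist_pos.2 hxy
      have h1 := hkey x y hxy
      have h2 := hkey y x hxy.symm
      rw [dist_comm y x] at h2
      have habs : |(s' / dist x y) * (g x - g y)| ≤ c := by
        rw [abs_le]
        constructor
        · nlinarith
        · exact h1.le
      rw [abs_mul, abs_of_pos (by positivity : (0:ℝ) < s' / dist x y)] at habs
      have hx : u x - u y = s' / c * (g x - g y) := by simp only [hu]; ring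
      rw [hx, abs_mul, abs_of_pos (by positivity : (0:ℝ) < s' / c)]
      rw [div_mul_eq_mul_div, div_le_iff₀ hc0]
      rw [div_mul_eq_mul_div, div_le_iff₀ hd] at habs
      linarith
  have hu0 : u x₀ = 0 := by simp [hu]
  have hfsum : f ξ = ∑ z, ξ z * g z := by
    have hξsum : ξ = ∑ z, ξ z • (Pi.single z 1 : X → ℝ) := by
      funext w
      simp [Finset.sum_apply, Pi.single_apply, Finset.sum_ite_eq']
    conv_lhs => rw [hξsum]
    rw [map_sum]
    simp [hg]
  have hcomp : (∑ z, ξ z * u z) = s' / c * f ξ := by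
    rw [hfsum]
    have : ∀ z, ξ z * u z = s' / c * (ξ z * g z) - (s' / c * g x₀) * ξ z := by
      intro z; simp only [hu]; ring
    rw [Finset.sum_congr rfl fun z _ => this z, Finset.sum_sub_distrib,
      ← Finset.mul_sum, ← Finset.mul_sum, hξ, mul_zero, sub_zero]
  have hmem : (∑ z, ξ z * u z) ∈ Ssup := ⟨u, hu0, hulip, rfl⟩
  have hle := le_csSup hbdd_sup hmem
  have hgt : s' < ∑ z, ξ z * u z := by
    rw [hcomp]
    calc s' = s' / c * c := by rw [div_mul_cancel₀ _ (ne_of_gt hc0)]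
      _ < s' / c * f ξ := by
          exact mul_lt_mul_of_pos_left hfξ (by positivity)
  linarith
end

section
/- In a finite pointed metric space (X,d,x₀) whose metric comes from a weighted graph, a function f ∈ Lip₁⁺(d) is an extreme point of the unit ball if and only if for every x ∈ X there is a path x₀, x₁, …, x_{n−1} = x of pairwise-close consecutive vertices with |f(x_i) − f(x_{i−1})| = d(x_i, x_{i−1}) for all i. -/
/-- Length of a path (list of vertices) in a weighted graph. -/
noncomputable def pathLen {X : Type*} (w : X → X → ℝ) : List X → ℝ
  | [] => 0
  | [_] => 0
  | a :: b :: l => w a b + pathLen w (b :: l)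

/-- `l` is a walk from `x` to `y` along edges of the weighted graph `w`. -/
def IsWalk {X : Type*} (w : X → X → ℝ) (x y : X) (l : List X) : Prop :=
  l.head? = some x ∧ l.getLast? = some y ∧ l.Chain' (fun a b => 0 < w a b)

/-- The shortest-path distance induced by the weighted graph `w`. -/
noncomputable def gdist {X : Type*} (w : X → X → ℝ) (x y : X) : ℝ :=
  sInf {r | ∃ l, IsWalk w x y l ∧ r = pathLen w l}

/-- Two vertices are close: adjacent and the edge realizes the distance. -/
def Close {X : Type*} (w : X → X → ℝ) (x y : X) : Prop :=
  0 < w x y ∧ gdist w x y = w x y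

section Helpers
variable {X : Type*} (w : X → X → ℝ)

lemma pathLen_nonneg (hnonneg : ∀ x y, 0 ≤ w x y) : ∀ l, 0 ≤ pathLen w l
  | [] => le_refl 0
  | [_] => le_refl 0
  | a :: b :: l => add_nonneg (hnonneg a b) (pathLen_nonneg hnonneg (b :: l))

lemma gdist_le_pathLen (hnonneg : ∀ x y, 0 ≤ w x y) {x y : X} {l : List X}
    (h : IsWalk w x y l) : gdist w x y ≤ pathLen w l :=
  csInf_le ⟨0, by rintro r ⟨l', -, rfl⟩; exact pathLen_nonneg w hnonneg l'⟩ ⟨l, h, rfl⟩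

lemma gdist_le_w (hnonneg : ∀ x y, 0 ≤ w x y) {x y : X} (h : 0 < w x y) :
    gdist w x y ≤ w x y := by
  have := gdist_le_pathLen w hnonneg (x := x) (y := y) (l := [x, y])
    ⟨rfl, rfl, List.isChain_pair.mpr h⟩
  simpa [pathLen] using this

lemma abs_sub_le_pathLen (g : X → ℝ)
    (hedge : ∀ a b, 0 < w a b → |g a - g b| ≤ w a b) :
    ∀ (l : List X) (x y : X), IsWalk w x y l → |g x - g y| ≤ pathLen w l
  | [], x, y, h => by simp [IsWalk] at h
  | [a], x, y, h => by
      obtain ⟨h1, h2, -⟩ := h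
      simp only [List.head?_cons, Option.some.injEq] at h1
      simp only [List.getLast?_singleton, Option.some.injEq] at h2
      subst h1; subst h2
      simp [pathLen]
  | a :: b :: t, x, y, h => by
      obtain ⟨h1, h2, h3⟩ := h
      simp only [List.head?_cons, Option.some.injEq] at h1
      subst h1
      rw [List.Chain', List.isChain_cons_cons] at h3
      have hrec := abs_sub_le_pathLen g hedge (b :: t) b y
        ⟨rfl, by rw [← h2]; simp, h3.2⟩
      calc |g a - g y| ≤ |g a - g b| + |g b - g y| := abs_sub_le _ _ _
        _ ≤ w a b + pathLen w (b :: t) := add_le_add (hedge _ _ h3.1) hrec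
        _ = pathLen w (a :: b :: t) := rfl

lemma abs_sub_le_gdist (hconn : ∀ x y : X, ∃ l, IsWalk w x y l) (g : X → ℝ)
    (hedge : ∀ a b, 0 < w a b → |g a - g b| ≤ w a b) (x y : X) :
    |g x - g y| ≤ gdist w x y := by
  apply le_csInf
  · obtain ⟨l, hl⟩ := hconn x y; exact ⟨pathLen w l, l, hl, rfl⟩
  · rintro r ⟨l, hl, rfl⟩; exact abs_sub_le_pathLen w g hedge l x y hl

end Helpers

/-- Extreme point characterization for the unit ball of the pointed Lipschitz space of
a finite weighted graph. -/
theorem extreme_lip_iff_path {X : Type*} [Fintype X] (w : X → X → ℝ)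
    (hsymm : ∀ x y, w x y = w y x) (hnonneg : ∀ x y, 0 ≤ w x y)
    (hconn : ∀ x y : X, ∃ l, IsWalk w x y l)
    (x₀ : X) (f : X → ℝ)
    (hf0 : f x₀ = 0) (hf1 : ∀ x y, |f x - f y| ≤ gdist w x y) :
    (∀ g h : X → ℝ, g x₀ = 0 → (∀ x y, |g x - g y| ≤ gdist w x y) →
        h x₀ = 0 → (∀ x y, |h x - h y| ≤ gdist w x y) →
        (∀ z, f z = (g z + h z) / 2) → g = f ∧ h = f) ↔
      (∀ x : X, ∃ (n : ℕ) (c : ℕ → X), c 0 = x₀ ∧ c n = x ∧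
        ∀ i < n, Close w (c i) (c (i + 1)) ∧
          |f (c (i + 1)) - f (c i)| = gdist w (c i) (c (i + 1))) := by
  classical
  constructor
  · -- extreme → tight paths
    intro hext x
    by_contra hx
    set S : Set X := {y | ∃ (n : ℕ) (c : ℕ → X), c 0 = x₀ ∧ c n = y ∧
        ∀ i < n, Close w (c i) (c (i + 1)) ∧
          |f (c (i + 1)) - f (c i)| = gdist w (c i) (c (i + 1))} with hSdef
    have hx0S : x₀ ∈ S := ⟨0, fun _ => x₀, rfl, rfl, fun i hi => absurd hi (Nat.not_lt_zero i)⟩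
    have hxS : x ∉ S := hx
    -- S is closed under tight close edges
    have hstep : ∀ a b : X, a ∈ S → Close w a b →
        |f b - f a| = gdist w a b → b ∈ S := by
      rintro a b ⟨n, c, h0, hn, hall⟩ hcl ht
      refine ⟨n + 1, fun i => if i ≤ n then c i else b, by simp [h0], by simp, ?_⟩
      intro i hi
      rcases lt_or_eq_of_le (Nat.lt_succ_iff.mp hi) with hlt | heq
      · have e1 : (if i ≤ n then c i else b) = c i := if_pos (le_of_lt hlt)
        have e2 : (if i + 1 ≤ n then c (i + 1) else b) = c (i + 1) := if_pos hlt
        simp only []; rw [e1, e2]; exact hall i hlt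
      · subst heq
        have e1 : (if i ≤ i then c i else b) = c i := if_pos le_rfl
        have e2 : (if i + 1 ≤ i then c (i + 1) else b) = b := if_neg (by omega)
        simp only []; rw [e1, e2, hn]; exact ⟨hcl, ht⟩
    -- crossing edges have slack
    have hcross : ∀ a b : X, a ∈ S → b ∉ S → 0 < w a b → |f a - f b| < w a b := by
      intro a b ha hb hw
      rcases lt_or_eq_of_le (le_trans (hf1 a b) (gdist_le_w w hnonneg hw)) with h | h
      · exact h
      · exfalso
        have h1 : |f a - f b| ≤ gdist w a b := hf1 a b
        have h2 : gdist w a b ≤ w a b := gdist_le_w w hnonneg hw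
        have heq1 : |f a - f b| = gdist w a b := le_antisymm h1 (by linarith)
        have heq2 : gdist w a b = w a b := le_antisymm h2 (by linarith)
        exact hb (hstep a b ha ⟨hw, heq2⟩ (by rw [abs_sub_comm]; exact heq1))
    -- the perturbation size
    have : Nonempty X := ⟨x₀⟩
    set P : X × X → ℝ := fun p =>
      if p.1 ∈ S ∧ p.2 ∉ S ∧ 0 < w p.1 p.2 then w p.1 p.2 - |f p.1 - f p.2| else 1
      with hPdef
    have hne : (Finset.univ : Finset (X × X)).Nonempty := Finset.univ_nonempty
    set ε : ℝ := Finset.univ.inf' hne P with hεdef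
    have hεpos : 0 < ε := by
      rw [hεdef, Finset.lt_inf'_iff]
      intro p _
      rw [hPdef]
      dsimp only
      split_ifs with hp
      · exact sub_pos.mpr (hcross p.1 p.2 hp.1 hp.2.1 hp.2.2)
      · exact one_pos
    have hεle : ∀ a b : X, a ∈ S → b ∉ S → 0 < w a b → ε ≤ w a b - |f a - f b| := by
      intro a b ha hb hw
      have h5 : ε ≤ P (a, b) := Finset.inf'_le P (Finset.mem_univ _)
      rw [hPdef] at h5
      simp only at h5
      rwa [if_pos ⟨ha, hb, hw⟩] at h5
    -- the perturbed functions
    set u : X → ℝ := fun z => if z ∈ S then 0 else ε with hudef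
    set g : X → ℝ := fun z => f z + u z with hgdef
    set h : X → ℝ := fun z => f z - u z with hhdef
    have hedge : ∀ a b, 0 < w a b → |u a - u b| + |f a - f b| ≤ w a b := by
      intro a b hw
      by_cases ha : a ∈ S <;> by_cases hb : b ∈ S
      · simp only [hudef, if_pos ha, if_pos hb, sub_self, abs_zero, zero_add]
        exact le_trans (hf1 a b) (gdist_le_w w hnonneg hw)
      · have := hεle a b ha hb hw
        simp only [hudef, if_pos ha, if_neg hb, zero_sub, abs_neg, abs_of_pos hεpos]
        linarith
      · have := hεle b a hb ha (by rw [← hsymm]; exact hw)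
        rw [hsymm a b]
        simp only [hudef, if_neg ha, if_pos hb, sub_zero, abs_of_pos hεpos]
        rw [abs_sub_comm (f a) (f b)]
        linarith
      · simp only [hudef, if_neg ha, if_neg hb, sub_self, abs_zero, zero_add]
        exact le_trans (hf1 a b) (gdist_le_w w hnonneg hw)
    have hglip : ∀ a b, |g a - g b| ≤ gdist w a b := by
      apply abs_sub_le_gdist w hconn
      intro a b hw
      calc |g a - g b| = |(f a - f b) + (u a - u b)| := by rw [hgdef]; ring_nf
        _ ≤ |f a - f b| + |u a - u b| := abs_add_le _ _
        _ ≤ w a b := by have := hedge a b hw; linarith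
    have hhlip : ∀ a b, |h a - h b| ≤ gdist w a b := by
      apply abs_sub_le_gdist w hconn
      intro a b hw
      calc |h a - h b| = |(f a - f b) - (u a - u b)| := by rw [hhdef]; ring_nf
        _ ≤ |f a - f b| + |u a - u b| := abs_sub _ _
        _ ≤ w a b := by have := hedge a b hw; linarith
    have hu0 : u x₀ = 0 := by rw [hudef]; exact if_pos hx0S
    have hgf := hext g h (by rw [hgdef]; simp [hu0, hf0]) hglip
      (by rw [hhdef]; simp [hu0, hf0]) hhlip (fun z => by rw [hgdef, hhdef]; ring)
    have : g x = f x := by rw [hgf.1]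
    rw [hgdef] at this
    simp only [hudef, if_neg hxS] at this
    linarith
  · -- tight paths → extreme
    intro hpath g h hg0 hg1 hh0 hh1 hmid
    have key : ∀ z, g z = f z ∧ h z = f z := by
      intro z
      obtain ⟨n, c, h0, hn, hall⟩ := hpath z
      suffices H : ∀ i, i ≤ n → g (c i) = f (c i) ∧ h (c i) = f (c i) by
        have := H n le_rfl; rwa [hn] at this
      intro i
      induction i with
      | zero => intro _; rw [h0]; exact ⟨by rw [hg0, hf0], by rw [hh0, hf0]⟩
      | succ i ih =>
        intro hi
        have hi' : i < n := hi
        obtain ⟨hgi, hhi⟩ := ih (le_of_lt hi')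
        obtain ⟨-, ht⟩ := hall i hi'
        obtain ⟨hA1, hA2⟩ := abs_le.mp (hg1 (c i) (c (i + 1)))
        obtain ⟨hB1, hB2⟩ := abs_le.mp (hh1 (c i) (c (i + 1)))
        have h3 := hmid (c (i + 1))
        have h4 := hmid (c i)
        rcases abs_cases (f (c (i + 1)) - f (c i)) with ⟨e1, e2⟩ | ⟨e1, e2⟩ <;>
          rw [e1] at ht <;> constructor <;> linarith
    exact ⟨funext fun z => (key z).1, funext fun z => (key z).2⟩
end

section
/- Let X carry the discrete metric (d(x,y) = 1 for x ≠ y) with base point x₀. Then u is an extreme point of the unit ball of Lip₁⁺(d) if and only if u = I_Y or u = −I_Y for some nonempty subset Y ⊆ X \ {x₀}, where I_Y is the indicator function of Y. -/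
set_option maxHeartbeats 1000000 in
/-- For the discrete metric, the extreme points of the unit ball of the pointed
Lipschitz space are exactly the signed indicators of nonempty subsets avoiding the
base point. -/
theorem extreme_lip_discrete_iff {X : Type*} [Fintype X] [DecidableEq X] [Nontrivial X]
    (x₀ : X) (u : X → ℝ)
    (hu0 : u x₀ = 0) (hu1 : ∀ x y : X, x ≠ y → |u x - u y| ≤ 1) :
    (∀ g h : X → ℝ, g x₀ = 0 → (∀ x y : X, x ≠ y → |g x - g y| ≤ 1) →
        h x₀ = 0 → (∀ x y : X, x ≠ y → |h x - h y| ≤ 1) →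
        (∀ z, u z = (g z + h z) / 2) → g = u ∧ h = u) ↔
      (∃ Y : Finset X, Y.Nonempty ∧ x₀ ∉ Y ∧
        ((u = fun z => if z ∈ Y then 1 else 0) ∨
          (u = fun z => if z ∈ Y then -1 else 0))) := by
  classical
  constructor
  · intro E
    -- Step 1: every value of u is -1, 0 or 1
    have hstep : ∀ x, u x = -1 ∨ u x = 0 ∨ u x = 1 := by
      by_contra hcon
      push_neg at hcon
      obtain ⟨a, ha1, ha0, ha2⟩ := hcon
      set P : X → Prop := fun x => u x ≠ -1 ∧ u x ≠ 0 ∧ u x ≠ 1 with hPdef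
      have hPa : P a := ⟨ha1, ha0, ha2⟩
      have hPx0 : ¬ P x₀ := fun hc => hc.2.1 hu0
      have habs : ∀ x, P x → |u x| < 1 := by
        intro x hx
        have hxne : x ≠ x₀ := by
          intro h; exact hx.2.1 (h ▸ hu0)
        have h1 := hu1 x x₀ hxne
        rw [hu0, sub_zero] at h1
        rcases lt_or_eq_of_le h1 with h | h
        · exact h
        · rcases (abs_eq (by norm_num : (0:ℝ) ≤ 1)).mp h with h2 | h2
          · exact absurd h2 hx.2.2
          · exact absurd h2 hx.1
      have key : ∀ x y, P x → ¬ P y → |u x - u y| < 1 := by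
        intro x y hx hy
        have hux := abs_lt.mp (habs x hx)
        have hy' : u y = -1 ∨ u y = 0 ∨ u y = 1 := by
          by_contra hc; push_neg at hc; exact hy ⟨hc.1, hc.2.1, hc.2.2⟩
        have hne0 : u x ≠ 0 := hx.2.1
        rcases hy' with h | h | h
        · have hxy : x ≠ y := by intro he; exact hx.1 (by rw [he, h])
          have h2 := abs_le.mp (hu1 x y hxy)
          rw [h] at h2 ⊢
          have hle : u x ≤ 0 := by linarith [h2.1]
          have hlt : u x < 0 := lt_of_le_of_ne hle hne0
          rw [abs_lt]; constructor <;> linarith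
        · rw [h, sub_zero]; exact habs x hx
        · have hxy : x ≠ y := by intro he; exact hx.2.2 (by rw [he, h])
          have h2 := abs_le.mp (hu1 x y hxy)
          rw [h] at h2 ⊢
          have hge : 0 ≤ u x := by linarith [h2.2]
          have hgt : 0 < u x := lt_of_le_of_ne hge (Ne.symm hne0)
          rw [abs_lt]; constructor <;> linarith
      -- the perturbation size
      set T : Finset (X × X) :=
        Finset.univ.filter (fun p : X × X => P p.1 ∧ ¬ P p.2) with hTdef
      have hTne : T.Nonempty := ⟨(a, x₀), Finset.mem_filter.mpr ⟨Finset.mem_univ _, hPa, hPx0⟩⟩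
      set ε : ℝ := T.inf' hTne (fun p => 1 - |u p.1 - u p.2|) with hεdef
      have hε0 : 0 < ε := by
        rw [hεdef, Finset.lt_inf'_iff]
        intro p hp
        rw [hTdef, Finset.mem_filter] at hp
        have := key p.1 p.2 hp.2.1 hp.2.2
        linarith
      have hεle : ∀ x y, P x → ¬ P y → ε ≤ 1 - |u x - u y| := by
        intro x y hx hy
        have hmem : (x, y) ∈ T := Finset.mem_filter.mpr ⟨Finset.mem_univ _, hx, hy⟩
        exact Finset.inf'_le (fun p => 1 - |u p.1 - u p.2|) hmem
      -- general Lipschitz bound for the perturbed function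
      have main : ∀ v : ℝ, |v| = ε → ∀ x y, x ≠ y →
          |(u x + if P x then v else 0) - (u y + if P y then v else 0)| ≤ 1 := by
        intro v hv x y hxy
        by_cases hx : P x <;> by_cases hy : P y
        · simp only [if_pos hx, if_pos hy]
          have : u x + v - (u y + v) = u x - u y := by ring
          rw [this]; exact hu1 x y hxy
        · simp only [if_pos hx, if_neg hy]
          have h1 := hεle x y hx hy
          have h2 : u x + v - (u y + 0) = (u x - u y) + v := by ring
          rw [h2]
          calc |(u x - u y) + v| ≤ |u x - u y| + |v| := abs_add_le _ _
            _ ≤ 1 := by rw [hv]; linarith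
        · simp only [if_neg hx, if_pos hy]
          have h1 := hεle y x hy hx
          have h2 : u x + 0 - (u y + v) = (u x - u y) + (-v) := by ring
          rw [h2]
          have h3 : |u x - u y| = |u y - u x| := abs_sub_comm _ _
          calc |(u x - u y) + (-v)| ≤ |u x - u y| + |(-v)| := abs_add_le _ _
            _ ≤ 1 := by rw [abs_neg, hv, h3]; linarith
        · simp only [if_neg hx, if_neg hy]
          have : u x + 0 - (u y + 0) = u x - u y := by ring
          rw [this]; exact hu1 x y hxy
      -- the two perturbations
      have habsε : |ε| = ε := abs_of_pos hε0
      have habsnegε : |(-ε)| = ε := by rw [abs_neg]; exact habsε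
      have hmidp : ∀ z, u z = ((fun x => u x + if P x then ε else 0) z +
          (fun x => u x + if P x then -ε else 0) z) / 2 := by
        intro z
        show u z = ((u z + if P z then ε else 0) + (u z + if P z then -ε else 0)) / 2
        by_cases hz : P z
        · rw [if_pos hz, if_pos hz]; ring
        · rw [if_neg hz, if_neg hz]; ring
      have hE := E (fun x => u x + if P x then ε else 0)
        (fun x => u x + if P x then -ε else 0)
        (by simp [hPx0, hu0])
        (main ε habsε)
        (by simp [hPx0, hu0])
        (main (-ε) habsnegε)
        hmidp
      have := congrFun hE.1 a
      simp only [if_pos hPa] at this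
      linarith
    -- Step 2: case analysis on the values taken
    by_cases h1 : ∃ y, u y = 1
    · obtain ⟨y1, hy1⟩ := h1
      refine ⟨Finset.univ.filter (fun x => u x = 1), ⟨y1, by simp [hy1]⟩,
        by simp [hu0], Or.inl ?_⟩
      funext z
      by_cases hz : u z = 1
      · simp [hz]
      · have hz0 : u z = 0 := by
          rcases hstep z with h | h | h
          · exfalso
            have hzy : y1 ≠ z := by intro he; rw [he, h] at hy1; norm_num at hy1
            have := hu1 y1 z hzy
            rw [hy1, h] at this
            norm_num at this
          · exact h
          · exact absurd h hz
        simp [hz, hz0]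
    · by_cases h2 : ∃ y, u y = -1
      · obtain ⟨y1, hy1⟩ := h2
        refine ⟨Finset.univ.filter (fun x => u x = -1), ⟨y1, by simp [hy1]⟩,
          by simp [hu0], Or.inr ?_⟩
        funext z
        by_cases hz : u z = -1
        · simp [hz]
        · have hz0 : u z = 0 := by
            rcases hstep z with h | h | h
            · exact absurd h hz
            · exact h
            · exact absurd ⟨z, h⟩ h1
          simp [hz, hz0]
      · -- u is identically 0, contradiction with extremality
        exfalso
        push_neg at h1 h2
        have hu : ∀ z, u z = 0 := by
          intro z
          rcases hstep z with h | h | h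
          · exact absurd h (h2 z)
          · exact h
          · exact absurd h (h1 z)
        obtain ⟨a, ha⟩ := exists_ne x₀
        have hlip : ∀ (c : ℝ), |c| ≤ 1 → ∀ x y : X, x ≠ y →
            |(if x = a then c else 0) - (if y = a then c else 0)| ≤ 1 := by
          intro c hc x y hxy
          by_cases hx : x = a <;> by_cases hy : y = a
          · exact absurd (hx.trans hy.symm) hxy
          · simpa [hx, hy] using hc
          · simp only [if_neg hx, if_pos hy, zero_sub, abs_neg]
            exact hc
          · simp [hx, hy]
        have hE := E (fun x => if x = a then 1 else 0) (fun x => if x = a then -1 else 0)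
          (by simp [Ne.symm ha]) (hlip 1 (by norm_num))
          (by simp [Ne.symm ha]) (hlip (-1) (by norm_num))
          (by intro z; rw [hu z]; by_cases hz : z = a <;> simp [hz])
        have := congrFun hE.1 a
        rw [hu a, if_pos rfl] at this
        norm_num at this
  · rintro ⟨Y, hYne, hx0Y, hcase⟩ g h hg0 hg1 hh0 hh1 hmid
    obtain ⟨y0, hy0⟩ := hYne
    have hy0x : y0 ≠ x₀ := fun he => hx0Y (he ▸ hy0)
    rcases hcase with hu | hu
    · -- u is the indicator of Y
      have hinY : ∀ z ∈ Y, g z = 1 ∧ h z = 1 := by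
        intro z hz
        have hzx : z ≠ x₀ := fun he => hx0Y (he ▸ hz)
        have hgz : |g z| ≤ 1 := by
          have := hg1 z x₀ hzx; rwa [hg0, sub_zero] at this
        have hhz : |h z| ≤ 1 := by
          have := hh1 z x₀ hzx; rwa [hh0, sub_zero] at this
        have hsum : g z + h z = 2 := by
          have := hmid z
          rw [hu] at this
          simp only [if_pos hz] at this
          linarith
        have hg' := abs_le.mp hgz
        have hh' := abs_le.mp hhz
        constructor <;> linarith
      have hout : ∀ z, z ∉ Y → z ≠ x₀ → g z = 0 ∧ h z = 0 := by
        intro z hz hzx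
        have hzy : z ≠ y0 := fun he => hz (he ▸ hy0)
        have hsum : g z + h z = 0 := by
          have := hmid z
          rw [hu] at this
          simp only [if_neg hz] at this
          linarith
        obtain ⟨hgy, hhy⟩ := hinY y0 hy0
        have hg' := abs_le.mp (hg1 z y0 hzy)
        have hh' := abs_le.mp (hh1 z y0 hzy)
        rw [hgy] at hg'
        rw [hhy] at hh'
        constructor <;> linarith [hg'.1, hh'.1]
      constructor <;> funext z <;> rw [hu] <;> by_cases hz : z ∈ Y
      · simp only [if_pos hz]; exact (hinY z hz).1
      · simp only [if_neg hz]
        by_cases hzx : z = x₀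
        · rw [hzx]; exact hg0
        · exact (hout z hz hzx).1
      · simp only [if_pos hz]; exact (hinY z hz).2
      · simp only [if_neg hz]
        by_cases hzx : z = x₀
        · rw [hzx]; exact hh0
        · exact (hout z hz hzx).2
    · -- u is minus the indicator of Y
      have hinY : ∀ z ∈ Y, g z = -1 ∧ h z = -1 := by
        intro z hz
        have hzx : z ≠ x₀ := fun he => hx0Y (he ▸ hz)
        have hgz : |g z| ≤ 1 := by
          have := hg1 z x₀ hzx; rwa [hg0, sub_zero] at this
        have hhz : |h z| ≤ 1 := by
          have := hh1 z x₀ hzx; rwa [hh0, sub_zero] at this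
        have hsum : g z + h z = -2 := by
          have := hmid z
          rw [hu] at this
          simp only [if_pos hz] at this
          linarith
        have hg' := abs_le.mp hgz
        have hh' := abs_le.mp hhz
        constructor <;> linarith
      have hout : ∀ z, z ∉ Y → z ≠ x₀ → g z = 0 ∧ h z = 0 := by
        intro z hz hzx
        have hzy : z ≠ y0 := fun he => hz (he ▸ hy0)
        have hsum : g z + h z = 0 := by
          have := hmid z
          rw [hu] at this
          simp only [if_neg hz] at this
          linarith
        obtain ⟨hgy, hhy⟩ := hinY y0 hy0
        have hg' := abs_le.mp (hg1 z y0 hzy)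
        have hh' := abs_le.mp (hh1 z y0 hzy)
        rw [hgy] at hg'
        rw [hhy] at hh'
        constructor <;> linarith [hg'.2, hh'.2]
      constructor <;> funext z <;> rw [hu] <;> by_cases hz : z ∈ Y
      · simp only [if_pos hz]; exact (hinY z hz).1
      · simp only [if_neg hz]
        by_cases hzx : z = x₀
        · rw [hzx]; exact hg0
        · exact (hout z hz hzx).1
      · simp only [if_pos hz]; exact (hinY z hz).2
      · simp only [if_neg hz]
        by_cases hzx : z = x₀
        · rw [hzx]; exact hh0
        · exact (hout z hz hzx).2
end

section
/- Let φ : X → ℝ be strictly positive and define d(x,y) = φ(x) + φ(y) for x ≠ y, d(x,x) = 0. Then for every zero-sum function ξ on X, the Arens–Eells norm satisfies ‖ξ‖_AE = Σ_{x∈X} φ(x)|ξ(x)|. -/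
lemma rep_sum {X : Type*} [Fintype X] [DecidableEq X] (a : X → X → ℝ) (z : X) :
    ∑ x, ∑ y, a x y * ((if z = x then (1:ℝ) else 0) - (if z = y then 1 else 0))
      = (∑ y, a z y) - ∑ x, a x z := by
  simp [mul_sub, Finset.sum_sub_distrib, mul_ite, Finset.sum_ite_eq, eq_comm]

lemma real_sign_mul_self (t : ℝ) : t * Real.sign t = |t| := by
  rcases lt_trichotomy t 0 with h | h | h
  · rw [Real.sign_of_neg h, abs_of_neg h]; ring
  · simp [h]
  · rw [Real.sign_of_pos h, abs_of_pos h]; ring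

lemma abs_sign_le (t : ℝ) : |Real.sign t| ≤ 1 := by
  rcases lt_trichotomy t 0 with h | h | h
  · simp [Real.sign_of_neg h]
  · simp [h]
  · simp [Real.sign_of_pos h]

/-- For the metric d(x,y) = φ(x) + φ(y) (x ≠ y) given by a strictly positive φ, the
Arens–Eells norm is the weighted ℓ¹ norm. -/
theorem aeNorm_phi_metric {X : Type*} [Fintype X] [DecidableEq X] [Nontrivial X]
    (φ : X → ℝ) (hφ : ∀ x, 0 < φ x) (ξ : X → ℝ) (hξ : ∑ z, ξ z = 0) :
    aeNorm (fun x y => if x = y then 0 else φ x + φ y) ξ = ∑ x, φ x * |ξ x| := by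
  set d : X → X → ℝ := fun x y => if x = y then 0 else φ x + φ y with hd
  have hmem : (∑ x, φ x * |ξ x|) ∈ {r | ∃ a : X → X → ℝ,
      (∀ z, ξ z = ∑ x, ∑ y, a x y * ((if z = x then (1:ℝ) else 0) - (if z = y then 1 else 0))) ∧
      r = ∑ x, ∑ y, |a x y| * d x y} := by
    set p : X → ℝ := fun x => max (ξ x) 0 with hp
    set q : X → ℝ := fun x => max (-ξ x) 0 with hq
    have hpq : ∀ x, p x - q x = ξ x := by
      intro x; simp only [hp, hq, max_def]; split_ifs <;> simp_all <;> linarith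
    have hpq0 : ∀ x, p x * q x = 0 := by
      intro x; simp only [hp, hq, max_def]; split_ifs with h1 h2 <;> simp_all <;> nlinarith
    have habs : ∀ x, p x + q x = |ξ x| := by
      intro x; simp only [hp, hq, max_def]
      rcases abs_cases (ξ x) with ⟨h1, h2⟩ | ⟨h1, h2⟩ <;> split_ifs <;> linarith
    have hpn : ∀ x, 0 ≤ p x := fun x => le_max_right _ _
    have hqn : ∀ x, 0 ≤ q x := fun x => le_max_right _ _
    set S := ∑ x, p x with hS
    have hSq : ∑ x, q x = S := by
      have : ∑ x, (p x - q x) = 0 := by simp_rw [hpq]; exact hξ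
      rw [Finset.sum_sub_distrib] at this; linarith
    by_cases hS0 : S = 0
    · have hsum0 : ∑ x, p x = 0 := by rw [← hS]; exact hS0
      have hp0 : ∀ x, p x = 0 := fun x =>
        (Finset.sum_eq_zero_iff_of_nonneg (fun x _ => hpn x)).mp hsum0 x (Finset.mem_univ x)
      have hq0 : ∀ x, q x = 0 := fun x =>
        (Finset.sum_eq_zero_iff_of_nonneg (fun x _ => hqn x)).mp (hSq.trans hS0) x (Finset.mem_univ x)
      have hξ0 : ∀ x, ξ x = 0 := fun x => by rw [← hpq x, hp0, hq0]; ring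
      exact ⟨0, fun z => by simp [hξ0], by simp [hξ0]⟩
    · have hSpos : 0 < S := lt_of_le_of_ne (Finset.sum_nonneg fun x _ => hpn x) (Ne.symm hS0)
      refine ⟨fun x y => p x * q y / S, ?_, ?_⟩
      · intro z
        rw [rep_sum]
        have h1 : ∑ y, p z * q y / S = p z := by
          rw [← Finset.sum_div, ← Finset.mul_sum, hSq]
          field_simp
        have h2 : ∑ x, p x * q z / S = q z := by
          rw [← Finset.sum_div, ← Finset.sum_mul, ← hS]
          field_simp
        rw [h1, h2, hpq]
      · have hterm : ∀ x y, |p x * q y / S| * d x y = p x * q y / S * (φ x + φ y) := by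
          intro x y
          rw [abs_of_nonneg (by positivity)]
          by_cases h : x = y
          · subst h; simp [hd, hpq0 x]
          · simp [hd, h]
        simp_rw [hterm]
        have hrow : ∀ x, ∑ y, p x * q y / S * (φ x + φ y)
            = p x * φ x + p x / S * ∑ y, q y * φ y := by
          intro x
          have : ∀ y, p x * q y / S * (φ x + φ y)
              = p x / S * (q y * φ x) + p x / S * (q y * φ y) := by intro y; ring
          simp_rw [this, Finset.sum_add_distrib, ← Finset.mul_sum, ← Finset.sum_mul, hSq]
          field_simp
        simp_rw [hrow]
        rw [Finset.sum_add_distrib]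
        have : ∑ x, p x / S * ∑ y, q y * φ y = ∑ y, q y * φ y := by
          rw [← Finset.sum_mul, ← Finset.sum_div, ← hS]
          field_simp
        rw [this]
        rw [← Finset.sum_add_distrib]
        apply Finset.sum_congr rfl
        intro x _
        rw [← habs x]; ring
  have hlb : ∀ r ∈ {r | ∃ a : X → X → ℝ,
      (∀ z, ξ z = ∑ x, ∑ y, a x y * ((if z = x then (1:ℝ) else 0) - (if z = y then 1 else 0))) ∧
      r = ∑ x, ∑ y, |a x y| * d x y}, (∑ x, φ x * |ξ x|) ≤ r := by
    rintro r ⟨a, ha, rfl⟩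
    set u : X → ℝ := fun x => Real.sign (ξ x) * φ x with hu
    have hub : ∀ x, |u x| ≤ φ x := by
      intro x
      rw [hu, abs_mul, abs_of_pos (hφ x)]
      calc |Real.sign (ξ x)| * φ x ≤ 1 * φ x :=
        mul_le_mul_of_nonneg_right (abs_sign_le _) (hφ x).le
      _ = φ x := one_mul _
    have hval : ∀ x, ξ x * u x = φ x * |ξ x| := by
      intro x; rw [hu]
      calc ξ x * (Real.sign (ξ x) * φ x) = (ξ x * Real.sign (ξ x)) * φ x := by ring
      _ = |ξ x| * φ x := by rw [real_sign_mul_self]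
      _ = φ x * |ξ x| := mul_comm _ _
    have key : ∑ z, ξ z * u z = ∑ x, ∑ y, a x y * (u x - u y) := by
      have : ∀ z, ξ z * u z = (∑ y, a z y) * u z - (∑ x, a x z) * u z := by
        intro z; rw [ha z, rep_sum]; ring
      simp_rw [this, Finset.sum_sub_distrib, Finset.sum_mul, mul_sub,
        Finset.sum_sub_distrib]
      congr 1
      exact Finset.sum_comm
    have hle : ∑ x, ∑ y, a x y * (u x - u y) ≤ ∑ x, ∑ y, |a x y| * d x y := by
      apply Finset.sum_le_sum; intro x _
      apply Finset.sum_le_sum; intro y _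
      calc a x y * (u x - u y) ≤ |a x y * (u x - u y)| := le_abs_self _
      _ = |a x y| * |u x - u y| := abs_mul _ _
      _ ≤ |a x y| * d x y := by
          apply mul_le_mul_of_nonneg_left _ (abs_nonneg _)
          by_cases h : x = y
          · subst h; simp [hd]
          · simp only [hd, if_neg h]
            calc |u x - u y| ≤ |u x| + |u y| := abs_sub _ _
            _ ≤ φ x + φ y := add_le_add (hub x) (hub y)
    calc ∑ x, φ x * |ξ x| = ∑ z, ξ z * u z := by simp_rw [hval]
    _ = ∑ x, ∑ y, a x y * (u x - u y) := key
    _ ≤ ∑ x, ∑ y, |a x y| * d x y := hle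
  exact IsLeast.csInf_eq ⟨hmem, hlb⟩
end

section
/- For the linearly ordered graph 1 → 2 → ⋯ → n with edge weights d_i = d(i,i+1) > 0, the Arens–Eells norm of ξ ∈ M₀ is ‖ξ‖_AE = Σ_{i=1}^{n−1} d_i |Ξ(i)|, where Ξ(i) = ξ₁ + ⋯ + ξ_i is the cumulative sum. -/
/-- For the linearly ordered (path) graph with edge weights dd i, the Arens–Eells norm
is the weighted ℓ¹ distance between cumulative sums. -/
theorem aeNorm_linear_order (n : ℕ) (hn : 2 ≤ n) (dd : ℕ → ℝ) (hdd : ∀ i, 0 < dd i)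
    (ξ : Fin n → ℝ) (hξ : ∑ i, ξ i = 0) :
    aeNorm
        (fun i j : Fin n => ∑ k ∈ Finset.Ico (min (i : ℕ) (j : ℕ)) (max (i : ℕ) (j : ℕ)), dd k)
        ξ =
      ∑ i ∈ Finset.range (n - 1),
        dd i * |∑ k ∈ Finset.univ.filter (fun k : Fin n => (k : ℕ) ≤ i), ξ k| := by
  classical
  set d : Fin n → Fin n → ℝ :=
    fun i j : Fin n => ∑ k ∈ Finset.Ico (min (i : ℕ) (j : ℕ)) (max (i : ℕ) (j : ℕ)), dd k
    with hd
  set S : ℕ → ℝ := fun i => ∑ k ∈ Finset.univ.filter (fun k : Fin n => (k : ℕ) ≤ i), ξ k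
    with hS
  show aeNorm d ξ = ∑ i ∈ Finset.range (n - 1), dd i * |S i|
  unfold aeNorm
  -- basic facts about cumulative sums
  have hSlast : ∀ i, n - 1 ≤ i → S i = 0 := by
    intro i hi
    have h1 : Finset.univ.filter (fun k : Fin n => (k : ℕ) ≤ i) = Finset.univ := by
      ext k
      simp only [Finset.mem_filter, Finset.mem_univ, true_and, iff_true]
      have := k.isLt; omega
    simp only [hS]
    rw [h1]; exact hξ
  have hSstep : ∀ z : Fin n, 1 ≤ (z : ℕ) → S (z : ℕ) = S ((z : ℕ) - 1) + ξ z := by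
    intro z hz
    have hins : Finset.univ.filter (fun k : Fin n => (k : ℕ) ≤ (z : ℕ)) =
        insert z (Finset.univ.filter (fun k : Fin n => (k : ℕ) ≤ (z : ℕ) - 1)) := by
      ext k
      simp only [Finset.mem_filter, Finset.mem_univ, true_and, Finset.mem_insert, Fin.ext_iff]
      omega
    have hnot : z ∉ Finset.univ.filter (fun k : Fin n => (k : ℕ) ≤ (z : ℕ) - 1) := by
      simp only [Finset.mem_filter, Finset.mem_univ, true_and]; omega
    simp only [hS]
    rw [hins, Finset.sum_insert hnot]; ring
  have hSzero : ∀ z : Fin n, (z : ℕ) = 0 → S 0 = ξ z := by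
    intro z hz
    have h1 : Finset.univ.filter (fun k : Fin n => (k : ℕ) ≤ 0) = {z} := by
      ext k
      simp only [Finset.mem_filter, Finset.mem_univ, true_and, Finset.mem_singleton, Fin.ext_iff]
      omega
    simp only [hS]
    rw [h1, Finset.sum_singleton]
  -- the distance as a sum over edges of the path
  have hD : ∀ x y : Fin n, d x y = ∑ k ∈ Finset.range (n - 1),
      dd k * |(if (x : ℕ) ≤ k then (1 : ℝ) else 0) - (if (y : ℕ) ≤ k then (1 : ℝ) else 0)| := by
    intro x y
    have hsub : Finset.Ico (min (x : ℕ) (y : ℕ)) (max (x : ℕ) (y : ℕ)) ⊆ Finset.range (n - 1) := by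
      intro k hk
      simp only [Finset.mem_Ico] at hk
      simp only [Finset.mem_range]
      have hx := x.isLt; have hy := y.isLt
      omega
    have hpt : ∀ k ∈ Finset.range (n - 1),
        dd k * |(if (x : ℕ) ≤ k then (1 : ℝ) else 0) - (if (y : ℕ) ≤ k then (1 : ℝ) else 0)| =
        if k ∈ Finset.Ico (min (x : ℕ) (y : ℕ)) (max (x : ℕ) (y : ℕ)) then dd k else 0 := by
      intro k _
      by_cases hx : (x : ℕ) ≤ k <;> by_cases hy : (y : ℕ) ≤ k
      · rw [if_pos hx, if_pos hy, if_neg (by simp only [Finset.mem_Ico]; omega)]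
        simp
      · rw [if_pos hx, if_neg hy, if_pos (by simp only [Finset.mem_Ico]; omega)]
        simp
      · rw [if_neg hx, if_pos hy, if_pos (by simp only [Finset.mem_Ico]; omega)]
        simp
      · rw [if_neg hx, if_neg hy, if_neg (by simp only [Finset.mem_Ico]; omega)]
        simp
    rw [Finset.sum_congr rfl hpt, Finset.sum_ite_mem, Finset.inter_eq_right.mpr hsub]
  -- cumulative sums from a representation
  have hcum : ∀ a : Fin n → Fin n → ℝ,
      (∀ z, ξ z = ∑ x, ∑ y, a x y *
        ((if z = x then (1 : ℝ) else 0) - (if z = y then (1 : ℝ) else 0))) →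
      ∀ k : ℕ, S k = ∑ x, ∑ y, a x y *
        ((if (x : ℕ) ≤ k then (1 : ℝ) else 0) - (if (y : ℕ) ≤ k then (1 : ℝ) else 0)) := by
    intro a ha k
    simp only [hS]
    calc ∑ z ∈ Finset.univ.filter (fun z : Fin n => (z : ℕ) ≤ k), ξ z
        = ∑ z ∈ Finset.univ.filter (fun z : Fin n => (z : ℕ) ≤ k), ∑ x, ∑ y, a x y *
            ((if z = x then (1 : ℝ) else 0) - (if z = y then (1 : ℝ) else 0)) :=
          Finset.sum_congr rfl fun z _ => ha z
      _ = ∑ x, ∑ y, a x y *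
            ((if (x : ℕ) ≤ k then (1 : ℝ) else 0) - (if (y : ℕ) ≤ k then (1 : ℝ) else 0)) := by
          rw [Finset.sum_comm]
          refine Finset.sum_congr rfl fun x _ => ?_
          rw [Finset.sum_comm]
          refine Finset.sum_congr rfl fun y _ => ?_
          rw [← Finset.mul_sum]
          congr 1
          rw [Finset.sum_sub_distrib, Finset.sum_ite_eq', Finset.sum_ite_eq']
          simp only [Finset.mem_filter, Finset.mem_univ, true_and]
  -- the lower bound
  have hlow : ∀ r ∈ {r | ∃ a : Fin n → Fin n → ℝ,
      (∀ z, ξ z = ∑ x, ∑ y, a x y *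
        ((if z = x then (1 : ℝ) else 0) - (if z = y then (1 : ℝ) else 0))) ∧
      r = ∑ x, ∑ y, |a x y| * d x y},
      (∑ i ∈ Finset.range (n - 1), dd i * |S i|) ≤ r := by
    rintro r ⟨a, ha, rfl⟩
    have hc := hcum a ha
    have hterm : ∀ x y : Fin n, |a x y| * d x y = ∑ k ∈ Finset.range (n - 1),
        dd k * |a x y * ((if (x : ℕ) ≤ k then (1 : ℝ) else 0) -
          (if (y : ℕ) ≤ k then (1 : ℝ) else 0))| := by
      intro x y
      rw [hD x y, Finset.mul_sum]
      refine Finset.sum_congr rfl fun k _ => ?_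
      rw [abs_mul]; ring
    calc ∑ i ∈ Finset.range (n - 1), dd i * |S i|
        ≤ ∑ k ∈ Finset.range (n - 1), dd k * ∑ x, ∑ y,
            |a x y * ((if (x : ℕ) ≤ k then (1 : ℝ) else 0) -
              (if (y : ℕ) ≤ k then (1 : ℝ) else 0))| := by
          refine Finset.sum_le_sum fun k _ => ?_
          rw [hc k]
          refine mul_le_mul_of_nonneg_left ?_ (hdd k).le
          calc |∑ x, ∑ y, a x y * ((if (x : ℕ) ≤ k then (1 : ℝ) else 0) -
                  (if (y : ℕ) ≤ k then (1 : ℝ) else 0))|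
              ≤ ∑ x, |∑ y, a x y * ((if (x : ℕ) ≤ k then (1 : ℝ) else 0) -
                  (if (y : ℕ) ≤ k then (1 : ℝ) else 0))| := Finset.abs_sum_le_sum_abs _ _
            _ ≤ ∑ x, ∑ y, |a x y * ((if (x : ℕ) ≤ k then (1 : ℝ) else 0) -
                  (if (y : ℕ) ≤ k then (1 : ℝ) else 0))| :=
                Finset.sum_le_sum fun x _ => Finset.abs_sum_le_sum_abs _ _
      _ = ∑ k ∈ Finset.range (n - 1), ∑ x, ∑ y,
            dd k * |a x y * ((if (x : ℕ) ≤ k then (1 : ℝ) else 0) -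
              (if (y : ℕ) ≤ k then (1 : ℝ) else 0))| := by
          refine Finset.sum_congr rfl fun k _ => ?_
          rw [Finset.mul_sum]
          exact Finset.sum_congr rfl fun x _ => Finset.mul_sum _ _ _
      _ = ∑ x, ∑ y, ∑ k ∈ Finset.range (n - 1),
            dd k * |a x y * ((if (x : ℕ) ≤ k then (1 : ℝ) else 0) -
              (if (y : ℕ) ≤ k then (1 : ℝ) else 0))| := by
          rw [Finset.sum_comm]
          exact Finset.sum_congr rfl fun x _ => Finset.sum_comm
      _ = ∑ x, ∑ y, |a x y| * d x y :=
          Finset.sum_congr rfl fun x _ => Finset.sum_congr rfl fun y _ => (hterm x y).symm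
  -- the optimal representation
  set a0 : Fin n → Fin n → ℝ :=
    fun x y => if (y : ℕ) = (x : ℕ) + 1 then S (x : ℕ) else 0 with ha0
  have hrep0 : ∀ z, ξ z = ∑ x, ∑ y, a0 x y *
      ((if z = x then (1 : ℝ) else 0) - (if z = y then (1 : ℝ) else 0)) := by
    intro z
    have eA : ∑ x, ∑ y, a0 x y * (if z = x then (1 : ℝ) else 0) = ∑ y, a0 z y := by
      rw [Finset.sum_comm]
      refine Finset.sum_congr rfl fun y _ => ?_
      simp [mul_ite, Finset.sum_ite_eq]
    have eB : ∑ x, ∑ y, a0 x y * (if z = y then (1 : ℝ) else 0) = ∑ x, a0 x z := by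
      refine Finset.sum_congr rfl fun x _ => ?_
      simp [mul_ite, Finset.sum_ite_eq]
    have eC : ∑ y : Fin n, a0 z y = S (z : ℕ) := by
      by_cases h : (z : ℕ) + 1 < n
      · rw [Finset.sum_eq_single (⟨(z : ℕ) + 1, h⟩ : Fin n)]
        · simp [ha0]
        · intro y _ hy
          simp only [ha0]
          rw [if_neg]
          intro hc
          exact hy (Fin.ext hc)
        · exact fun h' => absurd (Finset.mem_univ _) h'
      · rw [hSlast (z : ℕ) (by have := z.isLt; omega)]
        apply Finset.sum_eq_zero
        intro y _
        simp only [ha0]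
        rw [if_neg]
        have := y.isLt; omega
    have eD : ∑ x : Fin n, a0 x z = if 1 ≤ (z : ℕ) then S ((z : ℕ) - 1) else 0 := by
      split
      · next hz =>
        have h1 : (z : ℕ) - 1 < n := by have := z.isLt; omega
        rw [Finset.sum_eq_single (⟨(z : ℕ) - 1, h1⟩ : Fin n)]
        · show (if (z : ℕ) = ((z : ℕ) - 1) + 1 then S ((z : ℕ) - 1) else 0) = S ((z : ℕ) - 1)
          rw [if_pos (by omega)]
        · intro x _ hx
          simp only [ha0]
          rw [if_neg]
          intro hc
          apply hx
          apply Fin.ext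
          show (x : ℕ) = (z : ℕ) - 1
          omega
        · exact fun h' => absurd (Finset.mem_univ _) h'
      · next hz =>
        apply Finset.sum_eq_zero
        intro x _
        simp only [ha0]
        rw [if_neg]
        omega
    simp only [mul_sub, Finset.sum_sub_distrib]
    rw [eA, eB, eC, eD]
    split
    · next hz =>
      have := hSstep z hz
      linarith
    · next hz =>
      have hz0 : (z : ℕ) = 0 := by omega
      rw [hz0, hSzero z hz0]
      ring
  -- the cost of the optimal representation
  have hcost0 : ∑ x, ∑ y, |a0 x y| * d x y = ∑ i ∈ Finset.range (n - 1), dd i * |S i| := by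
    have e1 : ∀ x : Fin n, ∑ y, |a0 x y| * d x y =
        if (x : ℕ) + 1 < n then dd (x : ℕ) * |S (x : ℕ)| else 0 := by
      intro x
      by_cases h : (x : ℕ) + 1 < n
      · rw [if_pos h, Finset.sum_eq_single (⟨(x : ℕ) + 1, h⟩ : Fin n)]
        · have hdxy : d x ⟨(x : ℕ) + 1, h⟩ = dd (x : ℕ) := by
            show (∑ k ∈ Finset.Ico (min (x : ℕ) ((x : ℕ) + 1)) (max (x : ℕ) ((x : ℕ) + 1)),
              dd k) = dd (x : ℕ)
            have h2 : Finset.Ico (min (x : ℕ) ((x : ℕ) + 1)) (max (x : ℕ) ((x : ℕ) + 1)) =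
                {(x : ℕ)} := by
              ext m
              simp only [Finset.mem_Ico, Finset.mem_singleton]
              omega
            rw [h2, Finset.sum_singleton]
          have ha : a0 x ⟨(x : ℕ) + 1, h⟩ = S (x : ℕ) := by
            show (if (x : ℕ) + 1 = (x : ℕ) + 1 then S (x : ℕ) else 0) = S (x : ℕ)
            rw [if_pos rfl]
          rw [ha, hdxy, mul_comm]
        · intro y _ hy
          simp only [ha0]
          rw [if_neg, abs_zero, zero_mul]
          intro hc
          exact hy (Fin.ext hc)
        · exact fun h' => absurd (Finset.mem_univ _) h'
      · rw [if_neg h]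
        apply Finset.sum_eq_zero
        intro y _
        simp only [ha0]
        rw [if_neg, abs_zero, zero_mul]
        have := y.isLt; omega
    rw [Finset.sum_congr rfl fun x _ => e1 x,
      Fin.sum_univ_eq_sum_range (fun i => if i + 1 < n then dd i * |S i| else 0) n,
      ← Finset.sum_filter]
    congr 1
    ext i
    simp only [Finset.mem_filter, Finset.mem_range]
    omega
  -- conclusion
  have hmem : (∑ i ∈ Finset.range (n - 1), dd i * |S i|) ∈ {r | ∃ a : Fin n → Fin n → ℝ,
      (∀ z, ξ z = ∑ x, ∑ y, a x y *
        ((if z = x then (1 : ℝ) else 0) - (if z = y then (1 : ℝ) else 0))) ∧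
      r = ∑ x, ∑ y, |a x y| * d x y} := ⟨a0, hrep0, hcost0.symm⟩
  exact le_antisymm (csInf_le ⟨_, hlow⟩ hmem) (le_csInf ⟨_, hmem⟩ hlow)
end

section
/- For a weighted rooted tree T = (X,w) with root x₀ and tree metric d, the Arens–Eells norm of every ξ ∈ M₀(X) is ‖ξ‖_AE = Σ_{x ≠ x₀} d(x,x⁺) |Ξ(x)|, where x⁺ is the parent of x and Ξ(x) = Σ_{y ⪰ x} ξ(y) sums ξ over the descendants of x (including x). -/
/-- A finite rooted weighted tree, encoded by a parent map: every vertex reaches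
the root by iterating `parent`, and `wt x` is the weight of the edge `{x, parent x}`. -/
structure WRootedTree (X : Type*) where
  root : X
  parent : X → X
  wt : X → ℝ
  parent_root : parent root = root
  reach : ∀ x, ∃ n, parent^[n] x = root
  wt_pos : ∀ x, x ≠ root → 0 < wt x

/-- The weight function of the graph underlying a rooted tree. -/
noncomputable def treeW {X : Type*} [DecidableEq X] (T : WRootedTree X) : X → X → ℝ :=
  fun a b =>
    if a ≠ b ∧ T.parent a = b then T.wt a
    else if a ≠ b ∧ T.parent b = a then T.wt b
    else 0

/-- The tree metric: the shortest-path distance of the underlying weighted graph. -/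
noncomputable def tdist {X : Type*} [DecidableEq X] (T : WRootedTree X) : X → X → ℝ :=
  gdist (treeW T)

/-- `x ⪯ y` in the tree order: `x` lies on the path from the root to `y`. -/
def treeLE {X : Type*} (T : WRootedTree X) (x y : X) : Prop :=
  ∃ n, T.parent^[n] y = x

/-- Cumulative function `Ξ(x) = ∑_{y ⪰ x} ξ(y)`, the sum of `ξ` over descendants of `x`. -/
noncomputable def cumul {X : Type*} [Fintype X] (T : WRootedTree X) (ξ : X → ℝ) (x : X) : ℝ :=
  ∑ y, Set.indicator {y | treeLE T x y} ξ y

section Lemmas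
variable {X : Type*}

lemma iterate_root (T : WRootedTree X) (n : ℕ) : T.parent^[n] T.root = T.root := by
  induction n with
  | zero => rfl
  | succ n ih => rw [Function.iterate_succ_apply, T.parent_root, ih]

lemma eq_root_of_periodic (T : WRootedTree X) {z : X} {n : ℕ} (hn : 0 < n)
    (h : T.parent^[n] z = z) : z = T.root := by
  obtain ⟨m, hm⟩ := T.reach z
  have key : ∀ k, T.parent^[k * n] z = z := by
    intro k
    induction k with
    | zero => simp
    | succ k ih => rw [Nat.succ_mul, Function.iterate_add_apply, h, ih]
  have h1 : T.parent^[m * n] z = z := key m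
  have h2 : T.parent^[m * n] z = T.root := by
    have he : m * n = (m * n - m) + m := by
      have : m ≤ m * n := Nat.le_mul_of_pos_right m hn
      omega
    rw [he, Function.iterate_add_apply, hm, iterate_root]
  rw [h1] at h2; exact h2

lemma parent_ne (T : WRootedTree X) {x : X} (hx : x ≠ T.root) : T.parent x ≠ x :=
  fun h => hx (eq_root_of_periodic T (n := 1) one_pos h)

lemma treeLE_refl (T : WRootedTree X) (x : X) : treeLE T x x := ⟨0, rfl⟩

lemma treeLE_root (T : WRootedTree X) (x : X) : treeLE T T.root x := T.reach x

lemma treeLE_root_iff (T : WRootedTree X) {x : X} : treeLE T x T.root ↔ x = T.root := by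
  constructor
  · rintro ⟨n, hn⟩; rw [iterate_root] at hn; exact hn.symm
  · rintro rfl; exact treeLE_refl T _

lemma treeLE_of_parent (T : WRootedTree X) {x z : X} (h : treeLE T x (T.parent z)) :
    treeLE T x z := by
  obtain ⟨n, hn⟩ := h
  exact ⟨n + 1, by rw [Function.iterate_succ_apply]; exact hn⟩

lemma treeLE_iff (T : WRootedTree X) {x z : X} :
    treeLE T x z ↔ x = z ∨ treeLE T x (T.parent z) := by
  constructor
  · rintro ⟨n, hn⟩
    cases n with
    | zero => exact Or.inl hn.symm
    | succ n => exact Or.inr ⟨n, by rwa [Function.iterate_succ_apply] at hn⟩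
  · rintro (rfl | h)
    · exact treeLE_refl T _
    · exact treeLE_of_parent T h

lemma not_treeLE_parent (T : WRootedTree X) {z : X} (hz : z ≠ T.root) :
    ¬ treeLE T z (T.parent z) := by
  rintro ⟨m, hm⟩
  exact hz (eq_root_of_periodic T (Nat.succ_pos m)
    (by rw [Function.iterate_succ_apply]; exact hm))

end Lemmas

section Depth
open scoped Classical
variable {X : Type*}

noncomputable def tDepth (T : WRootedTree X) (x : X) : ℕ := Nat.find (T.reach x)

lemma tDepth_parent_lt (T : WRootedTree X) {x : X} (hx : x ≠ T.root) :
    tDepth T (T.parent x) < tDepth T x := by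
  have hspec : T.parent^[tDepth T x] x = T.root := Nat.find_spec (T.reach x)
  have hpos : 0 < tDepth T x := by
    rcases Nat.eq_zero_or_pos (tDepth T x) with h | h
    · rw [h] at hspec; exact absurd hspec hx
    · exact h
  obtain ⟨m, hm⟩ : ∃ m, tDepth T x = m + 1 := ⟨tDepth T x - 1, by omega⟩
  have : T.parent^[m] (T.parent x) = T.root := by
    rw [← Function.iterate_succ_apply]; rw [hm] at hspec; exact hspec
  have h2 : tDepth T (T.parent x) ≤ m := Nat.find_le this
  omega

/-- `accum T g x = ∑_{root ≺ u ⪯ x} g u`, defined by recursion up the tree. -/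
noncomputable def accum (T : WRootedTree X) (g : X → ℝ) (x : X) : ℝ :=
  if h : x = T.root then 0 else accum T g (T.parent x) + g x
termination_by tDepth T x
decreasing_by exact tDepth_parent_lt T h

lemma accum_root (T : WRootedTree X) (g : X → ℝ) : accum T g T.root = 0 := by
  rw [accum]; simp

lemma accum_ne (T : WRootedTree X) (g : X → ℝ) {x : X} (hx : x ≠ T.root) :
    accum T g x = accum T g (T.parent x) + g x := by
  rw [accum]; simp [hx]

end Depth

section Graph
variable {X : Type*} [DecidableEq X]

lemma treeW_child (T : WRootedTree X) {x : X} (hx : x ≠ T.root) :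
    treeW T x (T.parent x) = T.wt x := by
  have h1 : x ≠ T.parent x := (parent_ne T hx).symm
  simp [treeW, h1]

lemma treeW_child' (T : WRootedTree X) {x : X} (hx : x ≠ T.root) :
    treeW T (T.parent x) x = T.wt x := by
  have h1 : T.parent x ≠ x := parent_ne T hx
  have h2 : ¬ (T.parent x ≠ x ∧ T.parent (T.parent x) = x) := by
    rintro ⟨-, h⟩
    have : T.parent^[2] x = x := h
    exact h1 (by rw [eq_root_of_periodic T (by norm_num) this, T.parent_root,
      ← eq_root_of_periodic T (by norm_num) this])
  rw [treeW]
  rw [if_neg h2, if_pos ⟨h1, rfl⟩]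

lemma treeW_pos (T : WRootedTree X) {a b : X} (h : 0 < treeW T a b) :
    (a ≠ T.root ∧ T.parent a = b ∧ treeW T a b = T.wt a) ∨
    (b ≠ T.root ∧ T.parent b = a ∧ treeW T a b = T.wt b) := by
  unfold treeW at h ⊢
  by_cases h1 : a ≠ b ∧ T.parent a = b
  · left
    have ha : a ≠ T.root := by
      intro hr
      apply h1.1
      rw [← h1.2, hr, T.parent_root]
    exact ⟨ha, h1.2, by rw [if_pos h1]⟩
  · by_cases h2 : a ≠ b ∧ T.parent b = a
    · right
      have hb : b ≠ T.root := by
        intro hr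
        apply h2.1
        rw [← h2.2, hr, T.parent_root]
      exact ⟨hb, h2.2, by rw [if_neg h1, if_pos h2]⟩
    · rw [if_neg h1, if_neg h2] at h
      exact absurd h (lt_irrefl 0)

lemma pathLen_nonneg_s13 (w : X → X → ℝ) :
    ∀ l : List X, l.Chain' (fun a b => 0 < w a b) → 0 ≤ pathLen w l
  | [] => fun _ => le_refl 0
  | [_] => fun _ => le_refl 0
  | a :: b :: l => fun h => by
      simp only [List.Chain', List.isChain_cons_cons] at h
      have := pathLen_nonneg_s13 w (b :: l) h.2
      have := h.1
      unfold pathLen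
      linarith

lemma pathLen_potential (w : X → X → ℝ) (f : X → ℝ)
    (hf : ∀ a b, 0 < w a b → |f a - f b| ≤ w a b) :
    ∀ (l : List X) (x y : X), IsWalk w x y l → |f x - f y| ≤ pathLen w l
  | [], x, y => by rintro ⟨h, -, -⟩; simp at h
  | [a], x, y => by
      rintro ⟨h1, h2, -⟩
      simp at h1 h2
      subst h1; subst h2; simp [pathLen]
  | a :: b :: l, x, y => by
      rintro ⟨h1, h2, h3⟩
      simp at h1; subst h1
      simp only [List.Chain', List.isChain_cons_cons] at h3
      have hrec : |f b - f y| ≤ pathLen w (b :: l) :=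
        pathLen_potential w f hf (b :: l) b y ⟨rfl, by simpa using h2, h3.2⟩
      have hedge : |f a - f b| ≤ w a b := hf a b h3.1
      calc |f a - f y| ≤ |f a - f b| + |f b - f y| := abs_sub_le _ _ _
        _ ≤ pathLen w (a :: b :: l) := by
            unfold pathLen; linarith

lemma exists_walk_from_root (T : WRootedTree X) :
    ∀ (n : ℕ) (x : X), T.parent^[n] x = T.root → ∃ l, IsWalk (treeW T) T.root x l := by
  intro n
  induction n with
  | zero =>
    intro x hx
    simp only [Function.iterate_zero, id_eq] at hx
    exact ⟨[x], by simp [IsWalk, hx, List.Chain', List.isChain_singleton]⟩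
  | succ n ih =>
    intro x hx
    by_cases hr : x = T.root
    · exact ⟨[x], by simp [IsWalk, hr, List.Chain', List.isChain_singleton]⟩
    · have hp : T.parent^[n] (T.parent x) = T.root := by
        rw [← Function.iterate_succ_apply]; exact hx
      obtain ⟨l, hl1, hl2, hl3⟩ := ih (T.parent x) hp
      refine ⟨l ++ [x], ?_, ?_, ?_⟩
      · rcases l with - | ⟨a, l⟩
        · simp at hl1
        · simpa using hl1
      · simp
      · simp only [List.Chain']; rw [List.isChain_append]
        refine ⟨hl3, List.isChain_singleton x, ?_⟩
        intro a ha b hb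
        simp at hb; subst hb
        rw [hl2] at ha
        simp at ha; subst ha
        rw [treeW_child' T hr]
        exact T.wt_pos x hr

lemma exists_walk (T : WRootedTree X) (x y : X) :
    ∃ l, IsWalk (treeW T) x y l := by
  -- walk from x to root: reverse the walk from root to x
  obtain ⟨nx, hnx⟩ := T.reach x
  obtain ⟨l1, h11, h12, h13⟩ := exists_walk_from_root T nx x hnx
  obtain ⟨ny, hny⟩ := T.reach y
  obtain ⟨l2, h21, h22, h23⟩ := exists_walk_from_root T ny y hny
  -- l1.reverse is a walk from x to root
  have hsymm : ∀ a b : X, 0 < treeW T a b → 0 < treeW T b a := by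
    intro a b h
    rcases treeW_pos T h with ⟨ha, hab, heq⟩ | ⟨hb, hba, heq⟩
    · rw [← hab, treeW_child' T ha]; exact T.wt_pos a ha
    · rw [← hba, treeW_child T hb]; exact T.wt_pos b hb
  have hrev : IsWalk (treeW T) x T.root l1.reverse := by
    refine ⟨?_, ?_, ?_⟩
    · rw [List.head?_reverse]; exact h12
    · rw [List.getLast?_reverse]; exact h11
    · simp only [List.Chain']; rw [List.isChain_reverse]
      exact List.IsChain.imp (fun a b h => hsymm a b h) h13
  -- concatenate l1.reverse (x → root) with l2 (root → y)
  rcases l2 with - | ⟨a, t⟩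
  · simp at h21
  · simp at h21; subst h21
    rcases t with - | ⟨b, t⟩
    · simp at h22; subst h22
      exact ⟨l1.reverse, hrev⟩
    · refine ⟨l1.reverse ++ (b :: t), ?_, ?_, ?_⟩
      · rcases hl : l1.reverse with - | ⟨c, s⟩
        · rw [hl] at hrev; simp [IsWalk] at hrev
        · rw [hl] at hrev; simpa using hrev.1
      · rw [List.getLast?_append]
        · simpa using h22
      · simp only [List.Chain']; rw [List.isChain_append]
        refine ⟨hrev.2.2, (List.isChain_cons_cons.mp h23).2, ?_⟩
        intro c hc d hd
        rw [hrev.2.1] at hc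
        simp at hc hd
        subst hc; subst hd
        exact (List.isChain_cons_cons.mp h23).1

lemma tdist_nonneg (T : WRootedTree X) (x y : X) : 0 ≤ tdist T x y := by
  unfold tdist gdist
  apply Real.sInf_nonneg
  rintro r ⟨l, hl, rfl⟩
  exact pathLen_nonneg_s13 _ l hl.2.2

lemma tdist_le_wt (T : WRootedTree X) {x : X} (hx : x ≠ T.root) :
    tdist T x (T.parent x) ≤ T.wt x := by
  unfold tdist gdist
  apply csInf_le
  · refine ⟨0, ?_⟩
    rintro r ⟨l, hl, rfl⟩
    exact pathLen_nonneg_s13 _ l hl.2.2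
  · refine ⟨[x, T.parent x], ⟨rfl, rfl, ?_⟩, ?_⟩
    · simp only [List.Chain', List.isChain_cons_cons, List.isChain_singleton, and_true]
      rw [treeW_child T hx]; exact T.wt_pos x hx
    · simp [pathLen, treeW_child T hx]

lemma abs_sub_le_tdist (T : WRootedTree X) (f : X → ℝ)
    (hf : ∀ a b, 0 < treeW T a b → |f a - f b| ≤ treeW T a b) (x y : X) :
    |f x - f y| ≤ tdist T x y := by
  unfold tdist gdist
  apply le_csInf
  · obtain ⟨l, hl⟩ := exists_walk T x y
    exact ⟨pathLen (treeW T) l, l, hl, rfl⟩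
  · rintro r ⟨l, hl, rfl⟩
    exact pathLen_potential (treeW T) f hf l x y hl

end Graph

section Cumul
open scoped Classical
variable {X : Type*} [Fintype X] [DecidableEq X]

lemma cumul_eq (T : WRootedTree X) (ξ : X → ℝ) (x : X) :
    cumul T ξ x = ∑ y ∈ Finset.univ.filter (fun y => treeLE T x y), ξ y := by
  rw [cumul, Finset.sum_filter]
  apply Finset.sum_congr rfl
  intro y _
  by_cases h : treeLE T x y <;>
    simp [Set.indicator_apply, Set.mem_setOf_eq, h]

lemma cumul_root (T : WRootedTree X) (ξ : X → ℝ) (hξ : ∑ z, ξ z = 0) :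
    cumul T ξ T.root = 0 := by
  rw [cumul_eq, ← hξ]
  apply Finset.sum_congr _ (fun _ _ => rfl)
  ext y
  simp [treeLE_root T y]

/-- Existence and uniqueness of the child of `z` through which a strict descendant `y`
is attached. -/
lemma child_exists_unique (T : WRootedTree X) {y z : X} (hzy : treeLE T z y) (hyz : y ≠ z) :
    ∃! x, T.parent x = z ∧ x ≠ z ∧ treeLE T x y := by
  have hex : ∃ n, T.parent^[n] y = z := hzy
  have hspec : T.parent^[Nat.find hex] y = z := Nat.find_spec hex
  set n := Nat.find hex with hn
  have hnpos : 0 < n := by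
    rcases Nat.eq_zero_or_pos n with h | h
    · rw [h] at hspec
      simp only [Function.iterate_zero, id_eq] at hspec
      exact absurd hspec hyz
    · exact h
  obtain ⟨m, hm⟩ : ∃ m, n = m + 1 := ⟨n - 1, by omega⟩
  refine ⟨T.parent^[m] y, ⟨?_, ?_, ⟨m, rfl⟩⟩, ?_⟩
  · have h5 : T.parent^[m + 1] y = z := by rw [← hm]; exact hspec
    rw [Function.iterate_succ_apply'] at h5
    exact h5
  · intro hh
    have hle : n ≤ m := Nat.find_le (p := fun k => T.parent^[k] y = z) hh
    omega
  · rintro x ⟨hpx, hxz, ⟨k, hk⟩⟩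
    have hk1 : T.parent^[k+1] y = z := by
      rw [Function.iterate_succ_apply', hk, hpx]
    have hkn : n ≤ k + 1 := Nat.find_le hk1
    rcases Nat.lt_or_ge k n with hlt | hge
    · have : k = m := by omega
      rw [← hk, this]
    · exfalso
      have hxit : x = T.parent^[k - n] z := by
        rw [← hspec, ← Function.iterate_add_apply, ← hk]
        congr 1
        omega
      have hcyc : T.parent^[k - n + 1] z = z := by
        rw [Function.iterate_succ_apply', ← hxit, hpx]
      have hzroot : z = T.root := eq_root_of_periodic T (Nat.succ_pos _) hcyc
      have hxroot : x = T.root := by rw [hxit, hzroot, iterate_root]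
      exact hxz (by rw [hxroot, hzroot])

lemma child_filter_eq (T : WRootedTree X) (z : X) :
    Finset.univ.filter (fun x => x ≠ T.root ∧ T.parent x = z) =
    Finset.univ.filter (fun x => T.parent x = z ∧ x ≠ z) := by
  ext x
  simp only [Finset.mem_filter, Finset.mem_univ, true_and]
  constructor
  · rintro ⟨hxr, hpx⟩
    refine ⟨hpx, ?_⟩
    rintro rfl
    exact parent_ne T hxr hpx
  · rintro ⟨hpx, hxz⟩
    refine ⟨?_, hpx⟩
    rintro rfl
    rw [T.parent_root] at hpx
    exact hxz hpx

lemma children_cumul_sum (T : WRootedTree X) (ξ : X → ℝ) (z : X) :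
    ∑ x ∈ Finset.univ.filter (fun x => x ≠ T.root ∧ T.parent x = z), cumul T ξ x =
      cumul T ξ z - ξ z := by
  rw [child_filter_eq]
  have hswap : ∑ x ∈ Finset.univ.filter (fun x => T.parent x = z ∧ x ≠ z), cumul T ξ x
      = ∑ y : X, ∑ x ∈ Finset.univ.filter (fun x => T.parent x = z ∧ x ≠ z),
          (if treeLE T x y then ξ y else 0) := by
    rw [Finset.sum_comm]
    apply Finset.sum_congr rfl
    intro x _
    rw [cumul_eq, Finset.sum_filter]
  rw [hswap]
  have hinner : ∀ y : X, ∑ x ∈ Finset.univ.filter (fun x => T.parent x = z ∧ x ≠ z),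
      (if treeLE T x y then ξ y else 0) = if treeLE T z y ∧ y ≠ z then ξ y else 0 := by
    intro y
    rw [← Finset.sum_filter, Finset.filter_filter]
    by_cases hy : treeLE T z y ∧ y ≠ z
    · obtain ⟨x₀, hx₀, hx₀u⟩ := child_exists_unique T hy.1 hy.2
      have hsing : Finset.univ.filter (fun x => (T.parent x = z ∧ x ≠ z) ∧ treeLE T x y)
          = {x₀} := by
        ext x
        simp only [Finset.mem_filter, Finset.mem_univ, true_and, Finset.mem_singleton]
        constructor
        · rintro ⟨⟨h1, h2⟩, h3⟩; exact hx₀u x ⟨h1, h2, h3⟩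
        · rintro rfl; exact ⟨⟨hx₀.1, hx₀.2.1⟩, hx₀.2.2⟩
      rw [hsing, Finset.sum_singleton, if_pos hy]
    · rw [if_neg hy]
      apply Finset.sum_eq_zero
      intro x hx
      simp only [Finset.mem_filter, Finset.mem_univ, true_and] at hx
      exfalso
      apply hy
      obtain ⟨⟨h1, h2⟩, k, hk⟩ := hx
      have hz : treeLE T z y := ⟨k + 1, by rw [Function.iterate_succ_apply', hk, h1]⟩
      refine ⟨hz, ?_⟩
      rintro rfl
      have hcyc : T.parent^[k+1] y = y := by rw [Function.iterate_succ_apply', hk, h1]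
      have hroot : y = T.root := eq_root_of_periodic T (Nat.succ_pos k) hcyc
      apply h2
      rw [← hk, hroot, iterate_root]
  rw [Finset.sum_congr rfl (fun y _ => hinner y)]
  have hpt : ∀ y, (if treeLE T z y ∧ y ≠ z then ξ y else 0)
      = (if treeLE T z y then ξ y else 0) - (if y = z then ξ y else 0) := by
    intro y
    by_cases h1 : y = z
    · subst h1; simp [treeLE_refl]
    · simp [h1]
  rw [Finset.sum_congr rfl (fun y _ => hpt y), Finset.sum_sub_distrib,
    ← Finset.sum_filter, ← cumul_eq]
  congr 1
  simp

lemma accum_eq_sum (T : WRootedTree X) (g : X → ℝ) (z : X) :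
    accum T g z = ∑ x ∈ Finset.univ.filter (fun x => x ≠ T.root ∧ treeLE T x z), g x := by
  generalize hn : tDepth T z = n
  induction n using Nat.strong_induction_on generalizing z with
  | _ n ih =>
    by_cases hz : z = T.root
    · subst hz
      rw [accum_root]
      symm
      apply Finset.sum_eq_zero
      intro x hx
      simp only [Finset.mem_filter, Finset.mem_univ, true_and] at hx
      exact absurd ((treeLE_root_iff T).mp hx.2) hx.1
    · have hlt : tDepth T (T.parent z) < n := hn ▸ tDepth_parent_lt T hz
      have hset : Finset.univ.filter (fun x => x ≠ T.root ∧ treeLE T x z)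
          = insert z (Finset.univ.filter (fun x => x ≠ T.root ∧ treeLE T x (T.parent z))) := by
        ext x
        simp only [Finset.mem_insert, Finset.mem_filter, Finset.mem_univ, true_and]
        constructor
        · rintro ⟨hxr, hxz⟩
          rcases (treeLE_iff T).mp hxz with rfl | h
          · exact Or.inl rfl
          · exact Or.inr ⟨hxr, h⟩
        · rintro (rfl | ⟨hxr, h⟩)
          · exact ⟨hz, treeLE_refl T x⟩
          · exact ⟨hxr, treeLE_of_parent T h⟩
      have hzni : z ∉ Finset.univ.filter (fun x => x ≠ T.root ∧ treeLE T x (T.parent z)) := by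
        simp only [Finset.mem_filter, Finset.mem_univ, true_and, not_and]
        intro _
        exact not_treeLE_parent T hz
      rw [accum_ne T g hz, ih (tDepth T (T.parent z)) hlt (T.parent z) rfl, hset,
        Finset.sum_insert hzni]
      exact add_comm _ _

lemma sum_mul_accum (T : WRootedTree X) (g ξ : X → ℝ) :
    ∑ z, ξ z * accum T g z
      = ∑ x ∈ Finset.univ.filter (fun x => x ≠ T.root), g x * cumul T ξ x := by
  have hz : ∀ z, ξ z * accum T g z
      = ∑ x, (if x ≠ T.root ∧ treeLE T x z then g x * ξ z else 0) := by
    intro z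
    rw [accum_eq_sum, Finset.mul_sum, Finset.sum_filter]
    apply Finset.sum_congr rfl
    intro x _
    by_cases h : x ≠ T.root ∧ treeLE T x z
    · rw [if_pos h, if_pos h]; ring
    · simp [h]
  rw [Finset.sum_congr rfl (fun z _ => hz z), Finset.sum_comm, Finset.sum_filter]
  apply Finset.sum_congr rfl
  intro x _
  by_cases hx : x = T.root
  · simp [hx]
  · rw [if_pos hx, cumul_eq, Finset.sum_filter, Finset.mul_sum]
    apply Finset.sum_congr rfl
    intro z _
    by_cases h : treeLE T x z
    · rw [if_pos ⟨hx, h⟩, if_pos h]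
    · rw [if_neg (fun hh => h hh.2), if_neg h, mul_zero]

end Cumul

set_option maxHeartbeats 1000000 in
/-- Closed form of the Arens–Eells (Kantorovich) norm on a weighted rooted tree:
the weighted ℓ¹ norm of the cumulative function Ξ. -/
theorem aeNorm_tree_eq {X : Type*} [Fintype X] [DecidableEq X] (T : WRootedTree X)
    (ξ : X → ℝ) (hξ : ∑ z, ξ z = 0) :
    aeNorm (tdist T) ξ =
      ∑ x ∈ Finset.univ.filter (fun x => x ≠ T.root),
        tdist T x (T.parent x) * |cumul T ξ x| := by
  classical
  set t : ℝ := ∑ x ∈ Finset.univ.filter (fun x => x ≠ T.root),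
      tdist T x (T.parent x) * |cumul T ξ x| with ht
  set g : X → ℝ := fun x => (if 0 ≤ cumul T ξ x then (1:ℝ) else -1) * tdist T x (T.parent x)
    with hg
  set f : X → ℝ := accum T g with hf
  have htg : t = ∑ x ∈ Finset.univ.filter (fun x => x ≠ T.root), g x * cumul T ξ x := by
    rw [ht]
    apply Finset.sum_congr rfl
    intro x _
    have hgx : g x = (if 0 ≤ cumul T ξ x then (1:ℝ) else -1) * tdist T x (T.parent x) := rfl
    rw [hgx]
    by_cases h : 0 ≤ cumul T ξ x
    · rw [if_pos h, abs_of_nonneg h]; ring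
    · rw [if_neg h, abs_of_neg (lt_of_not_ge h)]; ring
  have hgabs : ∀ c, |g c| ≤ tdist T c (T.parent c) := by
    intro c
    have hgc : g c = (if 0 ≤ cumul T ξ c then (1:ℝ) else -1) * tdist T c (T.parent c) := rfl
    rw [hgc, abs_mul]
    have h1 : |if 0 ≤ cumul T ξ c then (1:ℝ) else -1| = 1 := by
      by_cases h : 0 ≤ cumul T ξ c <;> simp [h]
    rw [h1, one_mul, abs_of_nonneg (tdist_nonneg T c _)]
  have hedge : ∀ a b, 0 < treeW T a b → |f a - f b| ≤ treeW T a b := by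
    intro a b hab
    rcases treeW_pos T hab with ⟨ha, hpa, heq⟩ | ⟨hb, hpb, heq⟩
    · have hfa : f a = f b + g a := by rw [hf, accum_ne T g ha, hpa]
      rw [hfa, add_sub_cancel_left]
      calc |g a| ≤ tdist T a (T.parent a) := hgabs a
        _ ≤ T.wt a := tdist_le_wt T ha
        _ = treeW T a b := heq.symm
    · have hfb : f b = f a + g b := by rw [hf, accum_ne T g hb, hpb]
      have hd : f a - f b = -(g b) := by rw [hfb]; ring
      rw [hd, abs_neg]
      calc |g b| ≤ tdist T b (T.parent b) := hgabs b
        _ ≤ T.wt b := tdist_le_wt T hb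
        _ = treeW T a b := heq.symm
  have hsum : ∑ z, ξ z * f z = t := by
    rw [hf, sum_mul_accum, htg]
  have hlb : ∀ r ∈ {r | ∃ a : X → X → ℝ,
      (∀ z, ξ z = ∑ x, ∑ y, a x y * ((if z = x then 1 else 0) - (if z = y then 1 else 0))) ∧
      r = ∑ x, ∑ y, |a x y| * tdist T x y}, t ≤ r := by
    rintro r ⟨a, hrep, rfl⟩
    have hlip : ∀ x y, |f x - f y| ≤ tdist T x y := abs_sub_le_tdist T f hedge
    have hinner : ∀ x y : X,
        ∑ z, a x y * ((if z = x then (1:ℝ) else 0) - (if z = y then 1 else 0)) * f z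
          = a x y * (f x - f y) := by
      intro x y
      have hterm : ∀ z, a x y * ((if z = x then (1:ℝ) else 0) - (if z = y then 1 else 0)) * f z
          = a x y * ((if z = x then f z else 0) - (if z = y then f z else 0)) := by
        intro z
        simp only [mul_assoc, sub_mul, ite_mul, one_mul, zero_mul]
      rw [Finset.sum_congr rfl (fun z _ => hterm z), ← Finset.mul_sum,
        Finset.sum_sub_distrib]
      simp
    have step1 : ∑ z, ξ z * f z = ∑ x, ∑ y, a x y * (f x - f y) := by
      have hz : ∀ z, ξ z * f z = ∑ x, ∑ y,
          a x y * ((if z = x then (1:ℝ) else 0) - (if z = y then 1 else 0)) * f z := by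
        intro z
        rw [hrep z, Finset.sum_mul]
        apply Finset.sum_congr rfl
        intro x _
        rw [Finset.sum_mul]
      rw [Finset.sum_congr rfl (fun z _ => hz z), Finset.sum_comm]
      apply Finset.sum_congr rfl
      intro x _
      rw [Finset.sum_comm]
      exact Finset.sum_congr rfl (fun y _ => hinner x y)
    rw [← hsum, step1]
    apply Finset.sum_le_sum
    intro x _
    apply Finset.sum_le_sum
    intro y _
    calc a x y * (f x - f y) ≤ |a x y * (f x - f y)| := le_abs_self _
      _ = |a x y| * |f x - f y| := abs_mul _ _
      _ ≤ |a x y| * tdist T x y := by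
          exact mul_le_mul_of_nonneg_left (hlip x y) (abs_nonneg _)
  have hmem : t ∈ {r | ∃ a : X → X → ℝ,
      (∀ z, ξ z = ∑ x, ∑ y, a x y * ((if z = x then 1 else 0) - (if z = y then 1 else 0))) ∧
      r = ∑ x, ∑ y, |a x y| * tdist T x y} := by
    refine ⟨fun x y => if T.parent x = y ∧ x ≠ T.root then cumul T ξ x else 0, ?_, ?_⟩
    · intro z
      have hin : ∀ x : X, (∑ y, (if T.parent x = y ∧ x ≠ T.root then cumul T ξ x else 0) *
          ((if z = x then (1:ℝ) else 0) - (if z = y then 1 else 0)))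
          = (if x ≠ T.root then cumul T ξ x else 0) *
              ((if z = x then (1:ℝ) else 0) - (if z = T.parent x then 1 else 0)) := by
        intro x
        rw [Finset.sum_eq_single (T.parent x)]
        · congr 1
          by_cases h : x ≠ T.root
          · rw [if_pos ⟨rfl, h⟩, if_pos h]
          · rw [if_neg (fun c => h c.2), if_neg h]
        · intro y _ hy
          rw [if_neg (fun hh => hy hh.1.symm), zero_mul]
        · intro h
          exact absurd (Finset.mem_univ _) h
      rw [Finset.sum_congr rfl (fun x _ => hin x)]
      have hsplit : ∀ x : X, (if x ≠ T.root then cumul T ξ x else 0) *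
            ((if z = x then (1:ℝ) else 0) - (if z = T.parent x then 1 else 0))
          = (if z = x then (if x ≠ T.root then cumul T ξ x else 0) else 0)
            - (if x ≠ T.root ∧ T.parent x = z then cumul T ξ x else 0) := by
        intro x
        rw [mul_sub]
        congr 1
        · by_cases h1 : z = x
          · rw [if_pos h1, mul_one, if_pos h1]
          · rw [if_neg h1, mul_zero, if_neg h1]
        · by_cases h2 : x ≠ T.root
          · by_cases h3 : z = T.parent x
            · rw [if_pos h2, if_pos h3, mul_one, if_pos ⟨h2, h3.symm⟩]
            · rw [if_pos h2, if_neg h3, mul_zero, if_neg (fun c => h3 c.2.symm)]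
          · rw [if_neg h2, zero_mul, if_neg (fun c => h2 c.1)]
      rw [Finset.sum_congr rfl (fun x _ => hsplit x), Finset.sum_sub_distrib]
      have hfirst : (∑ x : X, if z = x then (if x ≠ T.root then cumul T ξ x else 0) else 0)
          = if z ≠ T.root then cumul T ξ z else 0 := by
        rw [Finset.sum_ite_eq]
        simp
      have hsecond : (∑ x : X, if x ≠ T.root ∧ T.parent x = z then cumul T ξ x else 0)
          = cumul T ξ z - ξ z := by
        rw [← Finset.sum_filter]
        exact children_cumul_sum T ξ z
      rw [hfirst, hsecond]
      by_cases hz : z = T.root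
      · rw [if_neg (by simp [hz]), hz, cumul_root T ξ hξ]
        ring
      · rw [if_pos hz]
        ring
    · rw [ht]
      have hin : ∀ x : X, (∑ y, |if T.parent x = y ∧ x ≠ T.root then cumul T ξ x else 0| *
          tdist T x y)
          = if x ≠ T.root then tdist T x (T.parent x) * |cumul T ξ x| else 0 := by
        intro x
        rw [Finset.sum_eq_single (T.parent x)]
        · by_cases h : x ≠ T.root
          · rw [if_pos ⟨rfl, h⟩, if_pos h, mul_comm]
          · rw [if_neg (fun c => h c.2), abs_zero, zero_mul, if_neg h]
        · intro y _ hy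
          rw [if_neg (fun hh => hy hh.1.symm), abs_zero, zero_mul]
        · intro h
          exact absurd (Finset.mem_univ _) h
      rw [Finset.sum_congr rfl (fun x _ => hin x), ← Finset.sum_filter]
  unfold aeNorm
  apply le_antisymm
  · exact csInf_le ⟨t, fun r hr => hlb r hr⟩ hmem
  · exact le_csInf ⟨t, hmem⟩ hlb
end
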